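/- arXiv:1602.04485 — 6 statements merged into one kernel-verified Lean document; each statement's English description precedes it below -/
import Mathlib

section
/- Let f, g : ℝ → ℝ be functions, and let Cr(f) denote the number of intervals in the coarsest partition of ℝ into intervals on which the classifier x ↦ 1[f(x) ≥ 1/2] is constant (assumed finite). Let I_f be this partition for f. Then (1/Cr(f)) · Σ_{U ∈ I_f} 1[∀ x ∈ U, 1[f(x) ≥ 1/2] ≠ 1[g(x) ≥ 1/2]] ≥ (1/2)(1 − 2·Cr(g)/Cr(f)). -/
open MeasureTheory
open scoped ENNReal

noncomputable section

/-- The classifier associated to `f`: `x ↦ 1[f x ≥ 1/2]`. -/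
def clf (f : ℝ → ℝ) (x : ℝ) : Prop := 1/2 ≤ f x

/-- `I` is a partition of `ℝ` into (nonempty) intervals. -/
def IsIntervalPartition (I : Finset (Set ℝ)) : Prop :=
  (∀ U ∈ I, U.OrdConnected ∧ U.Nonempty) ∧
  ((I : Set (Set ℝ)).PairwiseDisjoint id) ∧
  ⋃₀ (I : Set (Set ℝ)) = Set.univ

/-- `I` is a partition of `ℝ` into intervals on each of which the classifier of `f`
is constant; the crossing number `Cr f` is the minimal cardinality of such a partition. -/
def IsCrossingPartition (f : ℝ → ℝ) (I : Finset (Set ℝ)) : Prop :=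
  IsIntervalPartition I ∧ ∀ U ∈ I, ∀ x ∈ U, ∀ y ∈ U, (clf f x ↔ clf f y)

namespace CrossingAux

lemma exists_piece {I : Finset (Set ℝ)} (hI : IsIntervalPartition I) (x : ℝ) :
    ∃ U ∈ I, x ∈ U := by
  have hx : x ∈ ⋃₀ (I : Set (Set ℝ)) := hI.2.2 ▸ Set.mem_univ x
  simpa [Set.mem_sUnion] using hx

lemma piece_unique {I : Finset (Set ℝ)} (hI : IsIntervalPartition I)
    {U V : Set ℝ} (hU : U ∈ I) (hV : V ∈ I) {x : ℝ} (hxU : x ∈ U) (hxV : x ∈ V) :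
    U = V := by
  by_contra h
  exact Set.disjoint_left.mp (hI.2.1 (Finset.mem_coe.mpr hU) (Finset.mem_coe.mpr hV) h) hxU hxV

open Classical in
lemma merge_contra (f : ℝ → ℝ) (If : Finset (Set ℝ))
    (hf : IsCrossingPartition f If)
    (hfmin : ∀ J, IsCrossingPartition f J → If.card ≤ J.card)
    {Ua Ub : Set ℝ} (hUa : Ua ∈ If) (hUb : Ub ∈ If) (hne : Ua ≠ Ub)
    {a b : ℝ} (ha : a ∈ Ua) (hb : b ∈ Ub) (hab : a < b)
    (hconst : ∀ y ∈ Set.Icc a b, (clf f y ↔ clf f a)) : False := by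
  obtain ⟨hIP, hcst⟩ := hf
  set P : Set ℝ → Prop := fun W => (W ∩ Set.Icc a b).Nonempty with hPdef
  set T : Set ℝ := ⋃₀ ((If.filter P : Finset (Set ℝ)) : Set (Set ℝ)) with hTdef
  have hmemT : ∀ x : ℝ, x ∈ T ↔ ∃ W, (W ∈ If ∧ P W) ∧ x ∈ W := by
    intro x
    simp [hTdef, Set.mem_sUnion, Finset.mem_coe, Finset.mem_filter]
  have hPa : P Ua := ⟨a, ha, Set.mem_Icc.mpr ⟨le_refl a, le_of_lt hab⟩⟩
  have hPb : P Ub := ⟨b, hb, Set.mem_Icc.mpr ⟨le_of_lt hab, le_refl b⟩⟩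
  have haT : a ∈ T := (hmemT a).mpr ⟨Ua, ⟨hUa, hPa⟩, ha⟩
  -- T is ord-connected
  have hTord : T.OrdConnected := by
    constructor
    intro p hp q hq r hr
    obtain ⟨Wr, hWr, hrWr⟩ := exists_piece hIP r
    rcases le_or_gt a r with har | har
    · rcases le_or_gt r b with hrb | hrb
      · exact (hmemT r).mpr ⟨Wr, ⟨hWr, ⟨r, hrWr, Set.mem_Icc.mpr ⟨har, hrb⟩⟩⟩, hrWr⟩
      · -- r > b : use the piece of q
        obtain ⟨Wq, ⟨hWq, hPWq⟩, hqWq⟩ := (hmemT q).mp hq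
        obtain ⟨s, hsWq, hsI⟩ := hPWq
        have hrq : r ∈ Wq := (hIP.1 Wq hWq).1.out hsWq hqWq
          (Set.mem_Icc.mpr ⟨le_trans hsI.2 (le_of_lt hrb), hr.2⟩)
        exact (hmemT r).mpr ⟨Wq, ⟨hWq, ⟨s, hsWq, hsI⟩⟩, hrq⟩
    · -- r < a : use the piece of p
      obtain ⟨Wp, ⟨hWp, hPWp⟩, hpWp⟩ := (hmemT p).mp hp
      obtain ⟨s, hsWp, hsI⟩ := hPWp
      have hrp : r ∈ Wp := (hIP.1 Wp hWp).1.out hpWp hsWp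
        (Set.mem_Icc.mpr ⟨hr.1, le_trans (le_of_lt har) hsI.1⟩)
      exact (hmemT r).mpr ⟨Wp, ⟨hWp, ⟨s, hsWp, hsI⟩⟩, hrp⟩
  -- clf f is constant (≡ clf f a) on T
  have hTconst : ∀ x ∈ T, (clf f x ↔ clf f a) := by
    intro x hx
    obtain ⟨W, ⟨hW, hPW⟩, hxW⟩ := (hmemT x).mp hx
    obtain ⟨s, hsW, hsI⟩ := hPW
    exact (hcst W hW x hxW s hsW).trans (hconst s hsI)
  set J : Finset (Set ℝ) := insert T (If.filter fun W => ¬ P W) with hJdef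
  have hJcross : IsCrossingPartition f J := by
    refine ⟨⟨?_, ?_, ?_⟩, ?_⟩
    · intro U hU
      rcases Finset.mem_insert.mp hU with rfl | hU
      · exact ⟨hTord, ⟨a, haT⟩⟩
      · exact hIP.1 U (Finset.mem_filter.mp hU).1
    · have hcoe : (J : Set (Set ℝ)) =
          insert T ((If.filter fun W => ¬ P W : Finset (Set ℝ)) : Set (Set ℝ)) := by
        simp [hJdef]
      rw [hcoe]
      apply Set.PairwiseDisjoint.insert
      · exact hIP.2.1.subset (fun W hW => Finset.mem_coe.mpr
          ((Finset.mem_filter.mp (Finset.mem_coe.mp hW)).1))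
      · intro W hW hTW
        have hW' := Finset.mem_filter.mp (Finset.mem_coe.mp hW)
        refine Set.disjoint_left.mpr ?_
        intro z hzT hzW
        obtain ⟨W', ⟨hW'', hPW'⟩, hzW'⟩ := (hmemT z).mp hzT
        have : W' = W := piece_unique hIP hW'' hW'.1 hzW' hzW
        exact hW'.2 (this ▸ hPW')
    · apply Set.eq_univ_of_forall
      intro x
      obtain ⟨W, hW, hxW⟩ := exists_piece hIP x
      by_cases hPW : P W
      · exact Set.mem_sUnion.mpr ⟨T, Finset.mem_coe.mpr (Finset.mem_insert_self _ _),
          (hmemT x).mpr ⟨W, ⟨hW, hPW⟩, hxW⟩⟩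
      · exact Set.mem_sUnion.mpr ⟨W, Finset.mem_coe.mpr (Finset.mem_insert_of_mem
          (Finset.mem_filter.mpr ⟨hW, hPW⟩)), hxW⟩
    · intro U hU x hx y hy
      rcases Finset.mem_insert.mp hU with rfl | hU
      · exact (hTconst x hx).trans (hTconst y hy).symm
      · exact hcst U (Finset.mem_filter.mp hU).1 x hx y hy
  have hpair : ({Ua, Ub} : Finset (Set ℝ)) ⊆ If.filter P := by
    intro W hW
    rcases Finset.mem_insert.mp hW with rfl | hW
    · exact Finset.mem_filter.mpr ⟨hUa, hPa⟩
    · rw [Finset.mem_singleton] at hW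
      subst hW
      exact Finset.mem_filter.mpr ⟨hUb, hPb⟩
  have h2 : 2 ≤ (If.filter P).card := by
    calc 2 = ({Ua, Ub} : Finset (Set ℝ)).card := by
            rw [Finset.card_insert_of_notMem (by simpa using hne), Finset.card_singleton]
      _ ≤ (If.filter P).card := Finset.card_le_card hpair
  have hsum : (If.filter P).card + (If.filter fun W => ¬ P W).card = If.card :=
    Finset.card_filter_add_card_filter_not _
  have hJcard : J.card ≤ (If.filter fun W => ¬ P W).card + 1 := Finset.card_insert_le _ _
  have hmin : If.card ≤ J.card := hfmin J hJcross
  omega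

lemma exists_good_piece (f : ℝ → ℝ) (If : Finset (Set ℝ))
    (hf : IsCrossingPartition f If)
    (hfmin : ∀ J, IsCrossingPartition f J → If.card ≤ J.card)
    {Ua Ub : Set ℝ} (hUa : Ua ∈ If) (hUb : Ub ∈ If) (hne : Ua ≠ Ub)
    {a b : ℝ} (ha : a ∈ Ua) (hb : b ∈ Ub) (hab : a < b)
    (hfb : clf f b ↔ clf f a) :
    ∃ W ∈ If, W ⊆ Set.Ioo a b ∧ (∀ x ∈ W, ¬ (clf f x ↔ clf f a)) := by
  by_contra hno
  push_neg at hno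
  have hconst : ∀ y ∈ Set.Icc a b, (clf f y ↔ clf f a) := by
    intro y hy
    by_contra hyc
    obtain ⟨W, hW, hyW⟩ := exists_piece hf.1 y
    have hWa : W ≠ Ua := by
      rintro rfl
      exact hyc (hf.2 W hW y hyW a ha)
    have hWb : W ≠ Ub := by
      rintro rfl
      exact hyc ((hf.2 W hW y hyW b hb).trans hfb)
    have hya : a < y := by
      rcases lt_or_eq_of_le hy.1 with h | h
      · exact h
      · exact absurd (piece_unique hf.1 hW hUa hyW (h ▸ ha)) hWa
    have hyb : y < b := by
      rcases lt_or_eq_of_le hy.2 with h | h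
      · exact h
      · exact absurd (piece_unique hf.1 hW hUb hyW (h.symm ▸ hb)) hWb
    have hWsub : W ⊆ Set.Ioo a b := by
      intro w hw
      constructor
      · by_contra hwa
        push_neg at hwa
        have : a ∈ W := (hf.1.1 W hW).1.out hw hyW (Set.mem_Icc.mpr ⟨hwa, le_of_lt hya⟩)
        exact hWa (piece_unique hf.1 hW hUa this ha)
      · by_contra hwb
        push_neg at hwb
        have : b ∈ W := (hf.1.1 W hW).1.out hyW hw (Set.mem_Icc.mpr ⟨le_of_lt hyb, hwb⟩)
        exact hWb (piece_unique hf.1 hW hUb this hb)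
    obtain ⟨x, hxW, hxiff⟩ := hno W hW hWsub
    exact hyc ((hf.2 W hW y hyW x hxW).trans hxiff)
  exact merge_contra f If hf hfmin hUa hUb hne ha hb hab hconst

/-- If between any two points of `X` there is a (nonempty) member of `G` contained in the
open interval between them, then `|X| ≤ |G| + 1`. -/
lemma card_le_of_sep : ∀ (n : ℕ) (X : Finset ℝ) (G : Finset (Set ℝ)), X.card = n →
    (∀ W ∈ G, W.Nonempty) →
    (∀ a ∈ X, ∀ b ∈ X, a < b → ∃ W ∈ G, W ⊆ Set.Ioo a b) →
    X.card ≤ G.card + 1 := by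
  classical
  intro n
  induction n with
  | zero => intro X G hX _ _; simp [hX]
  | succ n ih =>
    intro X G hX hG hsep
    rcases le_or_gt X.card 1 with h1 | h1
    · omega
    · have hXne : X.Nonempty := Finset.card_pos.mp (by omega)
      set b := X.max' hXne with hbdef
      set X' := X.erase b with hX'def
      have hX'card : X'.card = n := by
        rw [hX'def, Finset.card_erase_of_mem (X.max'_mem hXne), hX]
        omega
      have hX'ne : X'.Nonempty := Finset.card_pos.mp (by omega)
      set a := X'.max' hX'ne with hadef
      have haX : a ∈ X := Finset.mem_of_mem_erase (X'.max'_mem hX'ne)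
      have hab : a < b := by
        have h1 : a ≤ b := X.le_max' a haX
        have h2 : a ≠ b := Finset.ne_of_mem_erase (X'.max'_mem hX'ne)
        exact lt_of_le_of_ne h1 h2
      obtain ⟨W, hWG, hWsub⟩ := hsep a haX b (X.max'_mem hXne) hab
      obtain ⟨w, hw⟩ := hG W hWG
      have haw : a < w := (hWsub hw).1
      have hsep' : ∀ p ∈ X', ∀ q ∈ X', p < q → ∃ W' ∈ G.erase W, W' ⊆ Set.Ioo p q := by
        intro p hp q hq hpq
        obtain ⟨W', hW'G, hW'sub⟩ := hsep p (Finset.mem_of_mem_erase hp)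
          q (Finset.mem_of_mem_erase hq) hpq
        refine ⟨W', Finset.mem_erase.mpr ⟨?_, hW'G⟩, hW'sub⟩
        rintro rfl
        have hq' : q ≤ a := X'.le_max' q hq
        exact absurd ((hW'sub hw).2.trans_le hq') (not_lt_of_gt haw)
      have hWGcard : 1 ≤ G.card := Finset.card_pos.mpr ⟨W, hWG⟩
      have := ih X' (G.erase W) hX'card (fun W' hW' => hG W' (Finset.mem_of_mem_erase hW')) hsep'
      rw [Finset.card_erase_of_mem hWG] at this
      omega

end CrossingAux

set_option maxHeartbeats 1000000 in
open Classical in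
/-- Lemma 3.1: a low-crossing `g` disagrees with a high-crossing `f` on many pieces. -/
theorem crossing_lower_bound (f g : ℝ → ℝ) (If Ig : Finset (Set ℝ))
    (hf : IsCrossingPartition f If) (hg : IsCrossingPartition g Ig)
    (hfmin : ∀ J, IsCrossingPartition f J → If.card ≤ J.card)
    (hgmin : ∀ J, IsCrossingPartition g J → Ig.card ≤ J.card) :
    ((If.filter fun U => ∀ x ∈ U, ¬ (clf f x ↔ clf g x)).card : ℝ) / If.card ≥
      (1/2) * (1 - 2 * (Ig.card : ℝ) / If.card) := by
  set G := If.filter (fun U => ∀ x ∈ U, ¬ (clf f x ↔ clf g x)) with hGdef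
  set B := If.filter (fun U => ¬ ∀ x ∈ U, ¬ (clf f x ↔ clf g x)) with hBdef
  have hIfne : If.Nonempty := by
    obtain ⟨U, hU, _⟩ := CrossingAux.exists_piece hf.1 0
    exact ⟨U, hU⟩
  have hn1 : 1 ≤ If.card := Finset.card_pos.mpr hIfne
  -- witnesses for bad pieces
  have hwit : ∀ U ∈ B, ∃ x, x ∈ U ∧ (clf f x ↔ clf g x) := by
    intro U hU
    have h := (Finset.mem_filter.mp hU).2
    push_neg at h
    exact h
  choose! w hw using hwit
  have hloc : ∀ U ∈ B, ∃ V, V ∈ Ig ∧ w U ∈ V := by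
    intro U hU
    obtain ⟨V, hV, hxV⟩ := CrossingAux.exists_piece hg.1 (w U)
    exact ⟨V, hV, hxV⟩
  choose! v hv using hloc
  have hBcard : B.card = ∑ V ∈ Ig, (B.filter fun U => v U = V).card :=
    Finset.card_eq_sum_card_fiberwise (fun U hU => (hv U hU).1)
  -- each fiber is controlled by the good pieces inside V
  have hfib : ∀ V ∈ Ig, (B.filter fun U => v U = V).card ≤
      (G.filter fun W => W ⊆ V).card + 1 := by
    intro V hV
    set S := B.filter (fun U => v U = V) with hSdef
    have hSB : ∀ U ∈ S, U ∈ B := fun U hU => (Finset.mem_filter.mp hU).1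
    have hSIf : ∀ U ∈ S, U ∈ If := fun U hU =>
      (Finset.mem_filter.mp (hSB U hU)).1
    have hinj : Set.InjOn w S := by
      intro U1 h1 U2 h2 heq
      exact CrossingAux.piece_unique hf.1 (hSIf U1 h1) (hSIf U2 h2)
        (hw U1 (hSB U1 (Finset.mem_coe.mp h1))).1
        (heq ▸ (hw U2 (hSB U2 (Finset.mem_coe.mp h2))).1)
    have hcardim : (S.image w).card = S.card := Finset.card_image_of_injOn hinj
    rw [← hcardim]
    apply CrossingAux.card_le_of_sep (S.image w).card (S.image w) (G.filter fun W => W ⊆ V) rfl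
    · intro W hW
      exact (hf.1.1 W (Finset.mem_filter.mp
        (Finset.mem_filter.mp hW).1).1).2
    · intro p hp q hq hpq
      obtain ⟨Up, hUpS, hUp⟩ := Finset.mem_image.mp hp
      obtain ⟨Uq, hUqS, hUq⟩ := Finset.mem_image.mp hq
      have hUpB := hSB Up hUpS
      have hUqB := hSB Uq hUqS
      have hUpIf : Up ∈ If := (Finset.mem_filter.mp hUpB).1
      have hUqIf : Uq ∈ If := (Finset.mem_filter.mp hUqB).1
      have hne : Up ≠ Uq := by
        rintro rfl
        rw [hUp] at hUq
        exact absurd hUq (ne_of_lt hpq)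
      have hpV : p ∈ V := by
        rw [← hUp]
        have := (Finset.mem_filter.mp hUpS).2
        exact this ▸ (hv Up hUpB).2
      have hqV : q ∈ V := by
        rw [← hUq]
        have := (Finset.mem_filter.mp hUqS).2
        exact this ▸ (hv Uq hUqB).2
      have hIccV : Set.Icc p q ⊆ V := (hg.1.1 V hV).1.out hpV hqV
      have hgpq : clf g p ↔ clf g q := hg.2 V hV p hpV q hqV
      have hfp : clf f p ↔ clf g p := hUp ▸ (hw Up hUpB).2
      have hfq : clf f q ↔ clf g q := hUq ▸ (hw Uq hUqB).2
      have hfb : clf f q ↔ clf f p := by tauto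
      obtain ⟨W, hWIf, hWsub, hWbad⟩ := CrossingAux.exists_good_piece f If hf hfmin hUpIf hUqIf hne
        ((hUp ▸ (hw Up hUpB).1)) ((hUq ▸ (hw Uq hUqB).1)) hpq hfb
      have hWV : W ⊆ V := fun x hx => hIccV (Set.Ioo_subset_Icc_self (hWsub hx))
      refine ⟨W, Finset.mem_filter.mpr ⟨Finset.mem_filter.mpr ⟨hWIf, ?_⟩, hWV⟩, hWsub⟩
      intro x hx
      have hgx : clf g x ↔ clf g p := hg.2 V hV x (hWV hx) p hpV
      have hfx := hWbad x hx
      tauto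
  -- the good pieces inside distinct V's are distinct
  have hsumG : ∑ V ∈ Ig, (G.filter fun W => W ⊆ V).card ≤ G.card := by
    have hdisj : ∀ V1 ∈ Ig, ∀ V2 ∈ Ig, V1 ≠ V2 →
        Disjoint (G.filter fun W => W ⊆ V1) (G.filter fun W => W ⊆ V2) := by
      intro V1 h1 V2 h2 hne
      rw [Finset.disjoint_left]
      intro W hW1 hW2
      have hWIf : W ∈ If := (Finset.mem_filter.mp (Finset.mem_filter.mp hW1).1).1
      obtain ⟨x, hx⟩ := (hf.1.1 W hWIf).2
      have hd := hg.1.2.1 (Finset.mem_coe.mpr h1) (Finset.mem_coe.mpr h2) hne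
      exact Set.disjoint_left.mp hd ((Finset.mem_filter.mp hW1).2 hx)
        ((Finset.mem_filter.mp hW2).2 hx)
    calc ∑ V ∈ Ig, (G.filter fun W => W ⊆ V).card
        = (Ig.biUnion fun V => G.filter fun W => W ⊆ V).card :=
          (Finset.card_biUnion hdisj).symm
      _ ≤ G.card := Finset.card_le_card (by
          intro W hW
          obtain ⟨V, _, hWV⟩ := Finset.mem_biUnion.mp hW
          exact (Finset.mem_filter.mp hWV).1)
  have hBle : B.card ≤ Ig.card + G.card := by
    calc B.card = ∑ V ∈ Ig, (B.filter fun U => v U = V).card := hBcard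
      _ ≤ ∑ V ∈ Ig, ((G.filter fun W => W ⊆ V).card + 1) :=
          Finset.sum_le_sum hfib
      _ = (∑ V ∈ Ig, (G.filter fun W => W ⊆ V).card) + Ig.card := by
          rw [Finset.sum_add_distrib, Finset.sum_const, smul_eq_mul, mul_one]
      _ ≤ G.card + Ig.card := by omega
      _ = Ig.card + G.card := by omega
  have hBG : G.card + B.card = If.card :=
    Finset.card_filter_add_card_filter_not _
  have key : If.card ≤ Ig.card + 2 * G.card := by omega
  -- final arithmetic
  have hn0 : (0:ℝ) < If.card := by exact_mod_cast hn1
  rw [ge_iff_le, le_div_iff₀ hn0]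
  have hkey : (If.card:ℝ) ≤ Ig.card + 2 * G.card := by exact_mod_cast key
  have hm : (2 * (Ig.card:ℝ) / If.card) * If.card = 2 * Ig.card := by
    field_simp
  nlinarith [hm, hkey]
end
end

section
/- If f : ℝ → ℝ is (s,[0,1])-triangle and g : ℝ → ℝ is (t,[0,1])-triangle, then the composition f ∘ g is (2st,[0,1])-triangle. -/
open MeasureTheory
open scoped ENNReal

noncomputable section

/-- `f` is `(t,[0,1])`-triangle (0-indexed breakpoints `a 0 < ⋯ < a (2t)`). -/
def IsTriangle (f : ℝ → ℝ) (t : ℕ) : Prop :=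
  0 < t ∧ ContinuousOn f (Set.Icc 0 1) ∧
  ∃ a : ℕ → ℝ, a 0 = 0 ∧ a (2*t) = 1 ∧
    (∀ i j, i < j → j ≤ 2*t → a i < a j) ∧
    (∀ i, i + 2 ≤ 2*t → f (a i) = f (a (i+2))) ∧
    f (a 0) = 0 ∧ f (a 1) = 1 ∧
    (∀ i, i < 2*t →
      (Even i → StrictMonoOn f (Set.Icc (a i) (a (i+1)))) ∧
      (Odd i → StrictAntiOn f (Set.Icc (a i) (a (i+1)))))

/-!
On each of its `2t` monotone pieces `[b q, b (q+1)]`, `g` is a homeomorphism onto `[0,1]`, so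
pulling back the `2s` pieces of `f` along it splits that piece into `2s` pieces on which `f ∘ g`
is a zigzag starting at `0` (read backwards on the decreasing pieces of `g`, which works since
`2s` is even). Concatenating these `2t` zigzags gives the `2s · 2t` pieces of `f ∘ g`.
-/

open Set

theorem eq_ite_even_of_two_periodic {α : Type*} {u : ℕ → α} {n : ℕ}
    (hu : ∀ i, i + 2 ≤ n → u i = u (i + 2)) :
    ∀ i ≤ n, u i = if Even i then u 0 else u 1
  | 0, _ => by simp
  | 1, _ => by simp
  | i + 2, hi => by
    rw [← hu i (by omega), eq_ite_even_of_two_periodic hu i (by omega)]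
    simp [Nat.even_add]

/-- The triangle condition on arbitrary breakpoints `a 0 < ⋯ < a n`, without continuity. -/
structure IsZigzag (f : ℝ → ℝ) (a : ℕ → ℝ) (n : ℕ) : Prop where
  strictMonoOn : StrictMonoOn a (Iic n)
  apply_eq : ∀ i ≤ n, f (a i) = if Even i then 0 else 1
  strictMonoOn_of_even : ∀ i < n, Even i → StrictMonoOn f (Icc (a i) (a (i + 1)))
  strictAntiOn_of_odd : ∀ i < n, Odd i → StrictAntiOn f (Icc (a i) (a (i + 1)))

theorem isTriangle_iff {f : ℝ → ℝ} {t : ℕ} :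
    IsTriangle f t ↔ 0 < t ∧ ContinuousOn f (Icc 0 1) ∧
      ∃ a : ℕ → ℝ, a 0 = 0 ∧ a (2 * t) = 1 ∧ IsZigzag f a (2 * t) := by
  constructor
  · rintro ⟨ht, hfc, a, ha0, ha1, ha, hper, hfa0, hfa1, hpieces⟩
    refine ⟨ht, hfc, a, ha0, ha1, fun i hi j hj hij => ha i j hij hj, fun i hi => ?_,
      fun i hi => (hpieces i hi).1, fun i hi => (hpieces i hi).2⟩
    simpa [hfa0, hfa1] using eq_ite_even_of_two_periodic (u := f ∘ a) hper i hi
  · rintro ⟨ht, hfc, a, ha0, ha1, hf⟩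
    refine ⟨ht, hfc, a, ha0, ha1, fun i j hij hj => hf.strictMonoOn (by simp; omega) hj hij,
      fun i hi => ?_, by simpa using hf.apply_eq 0, by simpa using hf.apply_eq 1 (by omega),
      fun i hi => ⟨hf.strictMonoOn_of_even i hi, hf.strictAntiOn_of_odd i hi⟩⟩
    rw [hf.apply_eq i (by omega), hf.apply_eq (i + 2) hi]
    simp [Nat.even_add]

namespace IsZigzag

variable {f g : ℝ → ℝ} {a : ℕ → ℝ} {n : ℕ}

theorem mono {m : ℕ} (hf : IsZigzag f a n) (hmn : m ≤ n) : IsZigzag f a m where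
  strictMonoOn := hf.strictMonoOn.mono (Iic_subset_Iic.2 hmn)
  apply_eq i hi := hf.apply_eq i (hi.trans hmn)
  strictMonoOn_of_even i hi := hf.strictMonoOn_of_even i (hi.trans_le hmn)
  strictAntiOn_of_odd i hi := hf.strictAntiOn_of_odd i (hi.trans_le hmn)

theorem le_of_le (hf : IsZigzag f a n) {i j : ℕ} (hij : i ≤ j) (hj : j ≤ n) : a i ≤ a j :=
  hf.strictMonoOn.monotoneOn (mem_Iic.2 (hij.trans hj)) (mem_Iic.2 hj) hij

theorem mapsTo_Icc (hf : IsZigzag f a n) : MapsTo f (Icc (a 0) (a n)) (Icc 0 1) := by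
  induction n with
  | zero => intro x hx; simp [le_antisymm hx.2 hx.1, hf.apply_eq 0 le_rfl]
  | succ n ih =>
    intro x ⟨hx0, hxn⟩
    rcases le_or_gt x (a n) with hx | hx
    · exact ih (hf.mono n.le_succ) ⟨hx0, hx⟩
    have hmem : x ∈ Icc (a n) (a (n + 1)) := ⟨hx.le, hxn⟩
    have hleft : a n ∈ Icc (a n) (a (n + 1)) := left_mem_Icc.2 (hx.le.trans hxn)
    have hright : a (n + 1) ∈ Icc (a n) (a (n + 1)) := right_mem_Icc.2 (hx.le.trans hxn)
    have hn := hf.apply_eq n n.le_succ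
    have hn1 := hf.apply_eq (n + 1) le_rfl
    rcases Nat.even_or_odd n with he | ho
    · have hmono := (hf.strictMonoOn_of_even n n.lt_succ_self he).monotoneOn
      simp only [he, Nat.even_add_one, not_true, if_true, if_false] at hn hn1
      exact ⟨hn ▸ hmono hleft hmem hmem.1, hn1 ▸ hmono hmem hright hmem.2⟩
    · have hanti := (hf.strictAntiOn_of_odd n n.lt_succ_self ho).antitoneOn
      simp only [Nat.not_even_iff_odd.2 ho, Nat.even_add_one, not_false_eq_true, if_true,
        if_false] at hn hn1
      exact ⟨hn1 ▸ hanti hmem hright hmem.2, hn ▸ hanti hleft hmem hmem.1⟩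

theorem comp_strictMonoOn (hf : IsZigzag f a n) {x y : ℝ} (hxy : x ≤ y)
    (hg : StrictMonoOn g (Icc x y)) (hgc : ContinuousOn g (Icc x y))
    (hgx : g x = a 0) (hgy : g y = a n) :
    ∃ c : ℕ → ℝ, c 0 = x ∧ c n = y ∧ IsZigzag (f ∘ g) c n := by
  have hsurj : ∀ i ≤ n, ∃ z ∈ Icc x y, g z = a i := fun i hi =>
    intermediate_value_Icc hxy hgc
      (by rw [hgx, hgy]; exact ⟨hf.le_of_le i.zero_le hi, hf.le_of_le hi le_rfl⟩)
  set c : ℕ → ℝ := fun i => Function.invFunOn g (Icc x y) (a i)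
  have hc_mem {i} (hi : i ≤ n) : c i ∈ Icc x y := Function.invFunOn_mem (hsurj i hi)
  have hgc_eq {i} (hi : i ≤ n) : g (c i) = a i := Function.invFunOn_eq (hsurj i hi)
  have hmaps {i} (hi : i < n) :
      MapsTo g (Icc (c i) (c (i + 1))) (Icc (a i) (a (i + 1))) := by
    intro z hz
    have hz' : z ∈ Icc x y := ⟨(hc_mem hi.le).1.trans hz.1, hz.2.trans (hc_mem hi).2⟩
    rw [← hgc_eq hi.le, ← hgc_eq hi]
    exact ⟨hg.monotoneOn (hc_mem hi.le) hz' hz.1, hg.monotoneOn hz' (hc_mem hi) hz.2⟩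
  have hsub {i} (hi : i < n) : Icc (c i) (c (i + 1)) ⊆ Icc x y :=
    Icc_subset_Icc (hc_mem hi.le).1 (hc_mem hi).2
  refine ⟨c, hg.injOn (hc_mem n.zero_le) (left_mem_Icc.2 hxy) (by rw [hgc_eq n.zero_le, hgx]),
    hg.injOn (hc_mem le_rfl) (right_mem_Icc.2 hxy) (by rw [hgc_eq le_rfl, hgy]), ?_, ?_, ?_, ?_⟩
  · intro i hi j hj hij
    rw [← hg.lt_iff_lt (hc_mem hi) (hc_mem hj), hgc_eq hi, hgc_eq hj]
    exact hf.strictMonoOn hi hj hij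
  · intro i hi
    simp only [Function.comp_apply, hgc_eq hi, hf.apply_eq i hi]
  · exact fun i hi he => (hf.strictMonoOn_of_even i hi he).comp (hg.mono (hsub hi)) (hmaps hi)
  · exact fun i hi ho =>
      (hf.strictAntiOn_of_odd i hi ho).comp_strictMonoOn (hg.mono (hsub hi)) (hmaps hi)

theorem comp_neg (hf : IsZigzag f a n) (hn : Even n) :
    IsZigzag (f ∘ Neg.neg) (fun i => -a (n - i)) n := by
  have hneg {s : Set ℝ} : StrictAntiOn Neg.neg s := fun _ _ _ _ h => neg_lt_neg h
  have hmaps {i} (hi : i < n) : MapsTo Neg.neg (Icc (-a (n - i)) (-a (n - (i + 1))))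
      (Icc (a (n - (i + 1))) (a (n - (i + 1) + 1))) := by
    intro z ⟨hz1, hz2⟩
    rw [show n - (i + 1) + 1 = n - i by omega]
    exact ⟨le_neg.1 hz2, neg_le.1 hz1⟩
  refine ⟨?_, ?_, ?_, ?_⟩
  · intro i hi j hj hij
    exact neg_lt_neg (hf.strictMonoOn (by simp) (by simp) (by simp at hi hj; omega))
  · intro i hi
    simp [hf.apply_eq (n - i) (n.sub_le i), Nat.even_sub hi, hn]
  · intro i hi he
    have ho : Odd (n - (i + 1)) := by
      rw [← Nat.not_even_iff_odd, Nat.even_sub hi, Nat.even_add_one]; simp [hn, he]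
    exact (hf.strictAntiOn_of_odd _ (by omega) ho).comp hneg (hmaps hi)
  · intro i hi ho
    have he : Even (n - (i + 1)) := by
      rw [Nat.even_sub hi, Nat.even_add_one]; simp [hn, Nat.not_even_iff_odd.2 ho]
    exact (hf.strictMonoOn_of_even _ (by omega) he).comp_strictAntiOn hneg (hmaps hi)

theorem comp_strictAntiOn (hf : IsZigzag f a n) (hn : Even n) {x y : ℝ} (hxy : x ≤ y)
    (hg : StrictAntiOn g (Icc x y)) (hgc : ContinuousOn g (Icc x y))
    (hgx : g x = a n) (hgy : g y = a 0) :
    ∃ c : ℕ → ℝ, c 0 = x ∧ c n = y ∧ IsZigzag (f ∘ g) c n := by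
  simpa [Function.comp_def] using (hf.comp_neg hn).comp_strictMonoOn hxy hg.neg hgc.neg
    (by simp [hgx]) (by simp [hgy])

theorem append {b : ℕ → ℝ} {m : ℕ} (ha : IsZigzag f a m) (hb : IsZigzag f b n) (hm : Even m)
    (hab : a m = b 0) :
    ∃ c : ℕ → ℝ, c 0 = a 0 ∧ c (m + n) = b n ∧ IsZigzag f c (m + n) := by
  set c : ℕ → ℝ := fun i => if i ≤ m then a i else b (i - m)
  have hc_left {i} (hi : i ≤ m) : c i = a i := if_pos hi
  have hc_right {i} (hi : m ≤ i) : c i = b (i - m) := by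
    rcases hi.eq_or_lt with rfl | hi
    · simp [c, hab]
    · exact if_neg hi.not_ge
  refine ⟨c, hc_left m.zero_le, by rw [hc_right (m.le_add_right n), m.add_sub_cancel_left],
    ?_, ?_, ?_, ?_⟩
  · intro i hi j hj hij
    simp only [mem_Iic] at hi hj
    rcases le_or_gt j m with hjm | hmj
    · rw [hc_left (hij.le.trans hjm), hc_left hjm]
      exact ha.strictMonoOn (mem_Iic.2 (hij.le.trans hjm)) (mem_Iic.2 hjm) hij
    rw [hc_right hmj.le]
    rcases lt_or_ge i m with him | hmi
    · rw [hc_left him.le]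
      calc a i < a m := ha.strictMonoOn (mem_Iic.2 him.le) (mem_Iic.2 le_rfl) him
        _ = b 0 := hab
        _ ≤ b (j - m) := hb.le_of_le (j - m).zero_le (by omega)
    · rw [hc_right hmi]
      exact hb.strictMonoOn (mem_Iic.2 (by omega)) (mem_Iic.2 (by omega)) (by omega)
  · intro i hi
    rcases le_or_gt i m with him | hmi
    · rw [hc_left him, ha.apply_eq i him]
    · rw [hc_right hmi.le, hb.apply_eq (i - m) (by omega)]
      simp [Nat.even_sub hmi.le, hm]
  · intro i hi he
    rcases lt_or_ge i m with him | hmi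
    · rw [hc_left him.le, hc_left him]
      exact ha.strictMonoOn_of_even i him he
    · rw [hc_right hmi, hc_right (hmi.trans i.le_succ), show i + 1 - m = i - m + 1 by omega]
      exact hb.strictMonoOn_of_even _ (by omega) ((Nat.even_sub hmi).2 (by simp [he, hm]))
  · intro i hi ho
    rcases lt_or_ge i m with him | hmi
    · rw [hc_left him.le, hc_left him]
      exact ha.strictAntiOn_of_odd i him ho
    · rw [hc_right hmi, hc_right (hmi.trans i.le_succ), show i + 1 - m = i - m + 1 by omega]
      refine hb.strictAntiOn_of_odd _ (by omega) ?_
      rw [← Nat.not_even_iff_odd, Nat.even_sub hmi]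
      simp [Nat.not_even_iff_odd.2 ho, hm]

theorem comp {b : ℕ → ℝ} {m : ℕ} (hf : IsZigzag f a m) (hm : Even m) (ha0 : a 0 = 0)
    (ham : a m = 1) (hg : IsZigzag g b n) (hgc : ContinuousOn g (Icc (b 0) (b n))) :
    ∃ c : ℕ → ℝ, c 0 = b 0 ∧ c (m * n) = b n ∧ IsZigzag (f ∘ g) c (m * n) := by
  induction n with
  | zero =>
    refine ⟨fun _ => b 0, rfl, rfl, fun i hi j hj hij => by simp at hi hj; omega,
      fun i hi => ?_, fun i hi => by simp at hi, fun i hi => by simp at hi⟩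
    have hi0 : i = 0 := by simpa using hi
    simp [hi0, hg.apply_eq 0 le_rfl, ← ha0, hf.apply_eq 0 m.zero_le]
  | succ n ih =>
    have hbn : b n ≤ b (n + 1) := hg.le_of_le n.le_succ le_rfl
    obtain ⟨c, hc0, hcn, hc⟩ := ih (hg.mono n.le_succ)
      (hgc.mono (Icc_subset_Icc_right hbn))
    have hgc' : ContinuousOn g (Icc (b n) (b (n + 1))) :=
      hgc.mono (Icc_subset_Icc_left (hg.le_of_le n.zero_le n.le_succ))
    have hgn := hg.apply_eq n n.le_succ
    have hgn1 := hg.apply_eq (n + 1) le_rfl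
    obtain ⟨d, hd0, hdm, hd⟩ : ∃ d : ℕ → ℝ, d 0 = b n ∧ d m = b (n + 1) ∧
        IsZigzag (f ∘ g) d m := by
      rcases Nat.even_or_odd n with he | ho
      · exact hf.comp_strictMonoOn hbn (hg.strictMonoOn_of_even n n.lt_succ_self he) hgc'
          (by simp [hgn, he, ha0]) (by simp [hgn1, Nat.even_add_one, he, ham])
      · exact hf.comp_strictAntiOn hm hbn (hg.strictAntiOn_of_odd n n.lt_succ_self ho) hgc'
          (by simp [hgn, Nat.not_even_iff_odd.2 ho, ham])
          (by simp [hgn1, Nat.even_add_one, Nat.not_even_iff_odd.2 ho, ha0])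
    obtain ⟨e, he0, hem, he⟩ := hc.append hd (hm.mul_right n) (hcn.trans hd0.symm)
    exact ⟨e, he0.trans hc0, by rw [Nat.mul_succ, hem, hdm], by rwa [Nat.mul_succ]⟩

end IsZigzag

/-- Lemma 3.7: the composition of an `(s,[0,1])`-triangle and a `(t,[0,1])`-triangle
function is `(2st,[0,1])`-triangle. -/
theorem triangle_comp (f g : ℝ → ℝ) (s t : ℕ)
    (hf : IsTriangle f s) (hg : IsTriangle g t) :
    IsTriangle (f ∘ g) (2 * s * t) := by
  obtain ⟨hs, hfc, a, ha0, ha1, hfa⟩ := isTriangle_iff.1 hf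
  obtain ⟨ht, hgc, b, hb0, hb1, hgb⟩ := isTriangle_iff.1 hg
  have hgmaps : MapsTo g (Icc 0 1) (Icc 0 1) := by simpa [hb0, hb1] using hgb.mapsTo_Icc
  obtain ⟨c, hc0, hc1, hc⟩ := hfa.comp (even_two_mul s) ha0 ha1 hgb (by rwa [hb0, hb1])
  rw [show 2 * s * (2 * t) = 2 * (2 * s * t) by ring] at hc1 hc
  exact isTriangle_iff.2
    ⟨by positivity, hfc.comp hgc hgmaps, c, hc0.trans hb0, hc1.trans hb1, hc⟩
end
end

section
/- Set f(z) := σ_R(2σ_R(z) − 4σ_R(z−1/2)) and let k ≥ 1. Let I be the partition of [0,1] into the maximal intervals on which 1[f^k(x) ≥ 1/2] is constant. Then |I| = 2^k + 1, and for each U ∈ I, ∫_U |f^k(x) − 1/2| dx ≥ 2^{−k−3}. -/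
open MeasureTheory
open scoped ENNReal

noncomputable section

/-- The ReLU. -/
def relu (z : ℝ) : ℝ := max 0 z

/-- The ReLU triangle map `f(z) = σ_R(2σ_R(z) − 4σ_R(z − 1/2))`. -/
def triangleF (z : ℝ) : ℝ := relu (2 * relu z - 4 * relu (z - 1/2))

/-- `I` is a partition of `[0,1]` into intervals on each of which the classifier of
`f` is constant; maximality of the intervals is captured by minimal cardinality. -/
def IsCrossingPartitionOn (f : ℝ → ℝ) (I : Finset (Set ℝ)) : Prop :=
  (∀ U ∈ I, U.OrdConnected ∧ U.Nonempty) ∧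
  ((I : Set (Set ℝ)).PairwiseDisjoint id) ∧
  ⋃₀ (I : Set (Set ℝ)) = Set.Icc (0:ℝ) 1 ∧
  ∀ U ∈ I, ∀ x ∈ U, ∀ y ∈ U, (clf f x ↔ clf f y)

/-!
On `[0, 1]` one has `f x = T (2 x)`, where `T y = ‖y‖` in `ℝ ⧸ 2ℤ` is the tent of period `2`,
and `T (2 T y) = T (2 y)`; hence `f^[k] x = T (2^k x)`. So at the lattice points `j / 2^k`
the classifier alternates with the parity of `j`, and the maximal intervals on which it is
constant are exactly the `2^k + 1` components through these points: near `j / 2^k` the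
classifier is that of `j`, and at a tie `|2^k x - j| = 1/2` it is true, so the odd neighbour
wins. Any crossing partition refines this one, so a minimal one equals it. Each component
contains a half-core of width `2^(-k-1)` next to `j / 2^k`, on which
`|f^[k] x - 1/2| = 1/2 - |2^k x - j|` is a triangle of area `2^(-k-3)`.
-/

lemma Finset.eq_of_refinement_of_card_le {α : Type*} {I K : Finset (Set α)}
    (hKdisj : (K : Set (Set α)).PairwiseDisjoint id) (hKne : ∀ V ∈ K, V.Nonempty)
    (hcover : ⋃₀ (K : Set (Set α)) ⊆ ⋃₀ (I : Set (Set α)))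
    (hrefine : ∀ U ∈ I, ∃ V ∈ K, U ⊆ V) (hcard : I.card ≤ K.card) : I = K := by
  classical
  have hunique : ∀ V ∈ K, ∀ W ∈ K, ∀ x ∈ V, x ∈ W → V = W := fun V hV W hW x hxV hxW ↦
    hKdisj.elim hV hW (Set.not_disjoint_iff.2 ⟨x, hxV, hxW⟩)
  have hpick : ∀ V ∈ K, ∃ U ∈ I, U ⊆ V ∧ (U ∩ V).Nonempty := by
    intro V hV
    obtain ⟨y, hy⟩ := hKne V hV
    obtain ⟨U, hU, hyU⟩ := hcover ⟨V, hV, hy⟩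
    obtain ⟨W, hW, hUW⟩ := hrefine U hU
    exact ⟨U, hU, hunique W hW V hV y (hUW hyU) hy ▸ hUW, y, hyU, hy⟩
  choose! g hgI hgV hgne using hpick
  have hinj : Set.InjOn g K := fun V hV W hW h ↦ by
    obtain ⟨y, hyU, hyV⟩ := hgne V hV
    exact hunique V hV W hW y hyV (hgV W hW (h ▸ hyU))
  have himage : K.image g = I := Finset.eq_of_subset_of_card_le
    (Finset.image_subset_iff.2 hgI) (by rwa [Finset.card_image_of_injOn hinj])
  have hfix : ∀ V ∈ K, g V = V := by
    refine fun V hV ↦ (hgV V hV).antisymm fun x hx ↦ ?_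
    obtain ⟨U, hU, hxU⟩ := hcover ⟨V, hV, hx⟩
    obtain ⟨W, hW, rfl⟩ := Finset.mem_image.1 (himage ▸ hU : U ∈ K.image g)
    rwa [hunique V hV W hW x hx (hgV W hW hxU)]
  rw [← himage, Finset.image_congr hfix, Finset.image_id']

def clfComponent (f : ℝ → ℝ) (a : ℝ) : Set ℝ :=
  Set.ordConnectedComponent {z | z ∈ Set.Icc 0 1 ∧ (clf f z ↔ clf f a)} a

section clfComponent

variable {f : ℝ → ℝ} {a b c x : ℝ}

lemma clfComponent_subset_Icc : clfComponent f a ⊆ Set.Icc 0 1 :=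
  fun _ hx ↦ (Set.ordConnectedComponent_subset hx).1

lemma clf_iff_of_mem_clfComponent (hx : x ∈ clfComponent f a) : clf f x ↔ clf f a :=
  (Set.ordConnectedComponent_subset hx).2

lemma self_mem_clfComponent (ha : a ∈ Set.Icc 0 1) : a ∈ clfComponent f a :=
  Set.self_mem_ordConnectedComponent.2 ⟨ha, Iff.rfl⟩

lemma clfComponent_eq_of_mem (hb : b ∈ clfComponent f a) : clfComponent f b = clfComponent f a := by
  have hlevel : {z | z ∈ Set.Icc 0 1 ∧ (clf f z ↔ clf f b)} =
      {z | z ∈ Set.Icc 0 1 ∧ (clf f z ↔ clf f a)} := by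
    simp only [clf_iff_of_mem_clfComponent hb]
  rw [clfComponent, clfComponent, hlevel]
  exact (Set.ordConnectedComponent_eq (Set.mem_ordConnectedComponent.1 hb)).symm

lemma disjoint_clfComponent (h : clfComponent f a ≠ clfComponent f b) :
    Disjoint (clfComponent f a) (clfComponent f b) :=
  Set.disjoint_left.2 fun _ hxa hxb ↦
    h ((clfComponent_eq_of_mem hxa).symm.trans (clfComponent_eq_of_mem hxb))

lemma not_mem_clfComponent (hab : a ≤ b) (hbc : b ≤ c) (hb : ¬(clf f b ↔ clf f a)) :
    c ∉ clfComponent f a := fun hc ↦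
  hb (Set.mem_ordConnectedComponent.1 hc (Set.Icc_subset_uIcc ⟨hab, hbc⟩)).2

lemma IsCrossingPartitionOn.subset_clfComponent {I : Finset (Set ℝ)}
    (hI : IsCrossingPartitionOn f I) {U : Set ℝ} (hU : U ∈ I) (hx : x ∈ U) :
    U ⊆ clfComponent f x := by
  obtain ⟨hconn, -, hunion, hconst⟩ := hI
  intro y hy z hz
  have hzU : z ∈ U := (hconn U hU).1.uIcc_subset hx hy hz
  exact ⟨hunion ▸ Set.subset_sUnion_of_mem hU hzU, hconst U hU z hzU x hx⟩

lemma isCrossingPartitionOn_image_clfComponent {ι : Type*} [DecidableEq (Set ℝ)]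
    (s : Finset ι) (p : ι → ℝ) (hp : ∀ i ∈ s, p i ∈ Set.Icc 0 1)
    (hcover : ∀ x ∈ Set.Icc (0 : ℝ) 1, ∃ i ∈ s, x ∈ clfComponent f (p i)) :
    IsCrossingPartitionOn f (s.image fun i ↦ clfComponent f (p i)) := by
  refine ⟨?_, ?_, ?_, ?_⟩
  · simp only [Finset.forall_mem_image]
    exact fun i hi ↦ ⟨by unfold clfComponent; infer_instance, _, self_mem_clfComponent (hp i hi)⟩
  · rw [Finset.coe_image]
    rintro _ ⟨i, -, rfl⟩ _ ⟨j, -, rfl⟩ hij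
    exact disjoint_clfComponent hij
  · rw [Finset.coe_image]
    refine subset_antisymm (Set.sUnion_subset ?_) fun x hx ↦ ?_
    · rintro _ ⟨i, -, rfl⟩
      exact clfComponent_subset_Icc
    · obtain ⟨i, hi, hxi⟩ := hcover x hx
      exact ⟨_, ⟨i, hi, rfl⟩, hxi⟩
  · simp only [Finset.forall_mem_image]
    exact fun i _ x hx y hy ↦
      (clf_iff_of_mem_clfComponent hx).trans (clf_iff_of_mem_clfComponent hy).symm

end clfComponent

def triangleWave (y : ℝ) : ℝ := ‖(y : AddCircle (2 : ℝ))‖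

lemma triangleWave_eq_abs_sub {y : ℝ} (m : ℤ) (h : |y - 2 * m| ≤ 1) :
    triangleWave y = |y - 2 * m| := by
  have hcoe : ((y - 2 * m : ℝ) : AddCircle (2 : ℝ)) = y := by
    rw [AddCircle.coe_sub, sub_eq_self, mul_comm, ← zsmul_eq_mul, AddCircle.coe_zsmul,
      AddCircle.coe_period, smul_zero]
  rw [triangleWave, ← hcoe, AddCircle.norm_coe_eq_abs_iff _ two_ne_zero]
  norm_num [h]

lemma triangleWave_mem_Icc (y : ℝ) : triangleWave y ∈ Set.Icc 0 1 :=
  ⟨norm_nonneg _, (AddCircle.norm_le_half_period 2 two_ne_zero).trans_eq (by norm_num)⟩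

lemma triangleWave_two_mul_triangleWave (y : ℝ) :
    triangleWave (2 * triangleWave y) = triangleWave (2 * y) := by
  set t := y - round (2⁻¹ * y) * 2
  have ht : triangleWave y = |t| := AddCircle.norm_eq _
  have hcoe : ((2 * t : ℝ) : AddCircle (2 : ℝ)) = ((2 * y : ℝ) : AddCircle (2 : ℝ)) := by
    rw [show 2 * t = 2 * y - (2 * round (2⁻¹ * y) : ℤ) • (2 : ℝ) by push_cast [t]; ring,
      AddCircle.coe_sub, AddCircle.coe_zsmul, AddCircle.coe_period, smul_zero, sub_zero]
  rw [ht, triangleWave, triangleWave, ← hcoe]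
  rcases abs_choice t with h | h <;> rw [h]
  rw [mul_neg, AddCircle.coe_neg, norm_neg]

lemma continuous_triangleF : Continuous triangleF := by
  unfold triangleF relu
  fun_prop

lemma triangleF_eq_triangleWave {x : ℝ} (hx : x ∈ Set.Icc 0 1) :
    triangleF x = triangleWave (2 * x) := by
  obtain ⟨h0, h1⟩ := hx
  rcases le_total x (1/2) with h | h
  · rw [triangleWave_eq_abs_sub 0 (by rw [abs_le]; constructor <;> push_cast <;> linarith),
      triangleF, relu, relu, relu, max_eq_right h0, max_eq_left (by linarith : x - 1/2 ≤ 0)]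
    push_cast
    rw [abs_of_nonneg (by linarith), max_eq_right (by linarith)]
    ring
  · rw [triangleWave_eq_abs_sub 1 (by rw [abs_le]; constructor <;> push_cast <;> linarith),
      triangleF, relu, relu, relu, max_eq_right h0, max_eq_right (by linarith : 0 ≤ x - 1/2)]
    push_cast
    rw [abs_of_nonpos (by linarith), max_eq_right (by linarith)]
    ring

lemma iterate_triangleF_eq (k : ℕ) {x : ℝ} (hx : x ∈ Set.Icc 0 1) :
    triangleF^[k] x = triangleWave (2 ^ k * x) := by
  induction k with
  | zero =>
    rw [Function.iterate_zero_apply, pow_zero, one_mul,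
      triangleWave_eq_abs_sub 0 (by simpa [abs_le] using ⟨by linarith [hx.1], hx.2⟩)]
    simp [abs_of_nonneg hx.1]
  | succ k ih =>
    rw [Function.iterate_succ_apply', ih, triangleF_eq_triangleWave (triangleWave_mem_Icc _),
      triangleWave_two_mul_triangleWave, pow_succ, mul_comm _ 2, mul_assoc]

lemma triangleWave_of_abs_sub_le {y : ℝ} (j : ℤ) (h : |y - j| ≤ 1/2) :
    triangleWave y = if Even j then |y - j| else 1 - |y - j| := by
  rw [abs_le] at h
  split_ifs with hj
  · obtain ⟨m, rfl⟩ := hj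
    rw [triangleWave_eq_abs_sub m (by push_cast at h ⊢; rw [abs_le]; constructor <;> linarith)]
    push_cast; ring_nf
  · obtain ⟨m, rfl⟩ := Int.not_even_iff_odd.mp hj
    push_cast at h ⊢
    rcases le_total y (2 * m + 1) with hy | hy
    · rw [triangleWave_eq_abs_sub m (by rw [abs_le]; constructor <;> linarith),
        abs_of_nonneg (by linarith), abs_of_nonpos (by linarith)]
      ring
    · rw [triangleWave_eq_abs_sub (m + 1) (by push_cast; rw [abs_le]; constructor <;> linarith),
        abs_of_nonpos (by push_cast; linarith), abs_of_nonneg (by linarith)]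
      push_cast; ring

lemma abs_triangleWave_sub_half {y : ℝ} (j : ℤ) (h : |y - j| ≤ 1/2) :
    |triangleWave y - 1/2| = 1/2 - |y - j| := by
  rw [triangleWave_of_abs_sub_le j h]
  split_ifs
  · rw [abs_of_nonpos (by linarith), neg_sub]
  · rw [abs_of_nonneg (by linarith)]; ring

lemma half_le_triangleWave_iff {y : ℝ} (j : ℤ) (h : |y - j| < 1/2) :
    1/2 ≤ triangleWave y ↔ Odd j := by
  rw [triangleWave_of_abs_sub_le j h.le, ← Int.not_even_iff_odd]
  split_ifs with hj <;> simp only [hj, not_true, not_false_iff, iff_false, iff_true] <;> linarith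

lemma half_le_triangleWave_of_odd {y : ℝ} {j : ℤ} (hj : Odd j) (h : |y - j| ≤ 1/2) :
    1/2 ≤ triangleWave y := by
  rw [triangleWave_of_abs_sub_le j h, if_neg (Int.not_even_iff_odd.2 hj)]
  linarith

lemma exists_nat_abs_sub_lt_or_odd {s : ℝ} (hs : 0 ≤ s) :
    ∃ j : ℕ, |s - j| < 1/2 ∨ Odd j ∧ |s - j| ≤ 1/2 := by
  have hlo : (⌊s⌋₊ : ℝ) ≤ s := Nat.floor_le hs
  have hhi : s < ⌊s⌋₊ + 1 := Nat.lt_floor_add_one s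
  rcases lt_trichotomy s (⌊s⌋₊ + 1/2) with h | h | h
  · exact ⟨⌊s⌋₊, Or.inl (by rw [abs_lt]; constructor <;> linarith)⟩
  · rcases Nat.even_or_odd ⌊s⌋₊ with he | ho
    · exact ⟨⌊s⌋₊ + 1, Or.inr ⟨he.add_one, by push_cast; rw [abs_le]; constructor <;> linarith⟩⟩
    · exact ⟨⌊s⌋₊, Or.inr ⟨ho, by rw [abs_le]; constructor <;> linarith⟩⟩
  · exact ⟨⌊s⌋₊ + 1, Or.inl (by push_cast; rw [abs_lt]; constructor <;> linarith)⟩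

section lattice

variable {k j : ℕ} {x : ℝ}

lemma div_two_pow_mem_Icc (hj : j ≤ 2 ^ k) : (j : ℝ) / 2 ^ k ∈ Set.Icc 0 1 :=
  ⟨by positivity, (div_le_one (by positivity)).2 (by exact_mod_cast hj)⟩

lemma clf_iterate_triangleF_iff (hx : x ∈ Set.Icc 0 1) (h : |2 ^ k * x - j| < 1/2) :
    clf (triangleF^[k]) x ↔ Odd j := by
  rw [clf, iterate_triangleF_eq k hx, half_le_triangleWave_iff j (by exact_mod_cast h),
    Int.odd_coe_nat]

lemma clf_iterate_triangleF_of_odd (hx : x ∈ Set.Icc 0 1) (hj : Odd j)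
    (h : |2 ^ k * x - j| ≤ 1/2) : clf (triangleF^[k]) x := by
  rw [clf, iterate_triangleF_eq k hx]
  exact half_le_triangleWave_of_odd ((Int.odd_coe_nat j).2 hj) (by exact_mod_cast h)

lemma abs_two_pow_mul_div_two_pow_sub (j : ℕ) : |2 ^ k * ((j : ℝ) / 2 ^ k) - j| = 0 := by
  rw [mul_div_cancel₀ _ (by positivity), sub_self, abs_zero]

lemma clf_iterate_triangleF_div_two_pow_iff (hj : j ≤ 2 ^ k) :
    clf (triangleF^[k]) ((j : ℝ) / 2 ^ k) ↔ Odd j :=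
  clf_iterate_triangleF_iff (div_two_pow_mem_Icc hj)
    (by rw [abs_two_pow_mul_div_two_pow_sub]; norm_num)

lemma mem_clfComponent_div_two_pow (hj : j ≤ 2 ^ k) (hx : x ∈ Set.Icc 0 1)
    (h : |2 ^ k * x - j| < 1/2 ∨ Odd j ∧ |2 ^ k * x - j| ≤ 1/2) :
    x ∈ clfComponent (triangleF^[k]) ((j : ℝ) / 2 ^ k) := by
  have hp := div_two_pow_mem_Icc hj
  have hscale : ∀ z : ℝ, |2 ^ k * z - j| = 2 ^ k * |z - j / 2 ^ k| := fun z ↦ by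
    rw [show (2 : ℝ) ^ k * z - j = 2 ^ k * (z - j / 2 ^ k) by field_simp, abs_mul,
      abs_of_pos (by positivity)]
  refine Set.mem_ordConnectedComponent.2 fun z hz ↦ ?_
  have hz01 : z ∈ Set.Icc 0 1 := Set.ordConnected_Icc.uIcc_subset hp hx hz
  have hzx : |2 ^ k * z - j| ≤ |2 ^ k * x - j| := by
    rw [hscale, hscale]
    exact mul_le_mul_of_nonneg_left (Set.abs_sub_left_of_mem_uIcc hz) (by positivity)
  refine ⟨hz01, ?_⟩
  rcases h with h | ⟨hodd, h⟩
  · rw [clf_iterate_triangleF_iff hz01 (hzx.trans_lt h), clf_iterate_triangleF_div_two_pow_iff hj]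
  · exact iff_of_true (clf_iterate_triangleF_of_odd hz01 hodd (hzx.trans h))
      (clf_iterate_triangleF_of_odd hp hodd (by rw [abs_two_pow_mul_div_two_pow_sub]; norm_num))

lemma exists_mem_clfComponent_div_two_pow (hx : x ∈ Set.Icc 0 1) :
    ∃ j : ℕ, j ≤ 2 ^ k ∧ x ∈ clfComponent (triangleF^[k]) ((j : ℝ) / 2 ^ k) := by
  obtain ⟨j, hj⟩ := exists_nat_abs_sub_lt_or_odd (by positivity [hx.1] : 0 ≤ 2 ^ k * x)
  have hjk : j ≤ 2 ^ k := by
    have hnear : |2 ^ k * x - j| ≤ 1/2 := hj.elim le_of_lt And.right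
    have : (2 : ℝ) ^ k * x ≤ 2 ^ k := mul_le_of_le_one_right (by positivity) hx.2
    have : (j : ℝ) < 2 ^ k + 1 := by rw [abs_le] at hnear; linarith
    exact_mod_cast Nat.lt_succ_iff.1 (by exact_mod_cast this)
  exact ⟨j, hjk, mem_clfComponent_div_two_pow hjk hx hj⟩

lemma clfComponent_div_two_pow_ne {i m : ℕ} (him : i < m) (hm : m ≤ 2 ^ k) :
    clfComponent (triangleF^[k]) ((i : ℝ) / 2 ^ k) ≠
      clfComponent (triangleF^[k]) ((m : ℝ) / 2 ^ k) := by
  intro h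
  have hflip : ¬(clf (triangleF^[k]) (((i + 1 : ℕ) : ℝ) / 2 ^ k) ↔
      clf (triangleF^[k]) ((i : ℝ) / 2 ^ k)) := by
    rw [clf_iterate_triangleF_div_two_pow_iff (by omega),
      clf_iterate_triangleF_div_two_pow_iff (by omega), Nat.odd_add_one]
    exact not_iff_self
  refine not_mem_clfComponent ?_ ?_ hflip (h ▸ self_mem_clfComponent (div_two_pow_mem_Icc hm)) <;>
    gcongr <;> exact_mod_cast (by omega)

lemma injOn_clfComponent_div_two_pow (k : ℕ) :
    Set.InjOn (fun j : ℕ ↦ clfComponent (triangleF^[k]) ((j : ℝ) / 2 ^ k))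
      (Finset.range (2 ^ k + 1)) := by
  intro i hi m hm h
  simp only [Finset.coe_range, Set.mem_Iio] at hi hm
  by_contra hne
  rcases Nat.lt_or_gt_of_ne hne with hlt | hlt
  · exact clfComponent_div_two_pow_ne hlt (by omega) h
  · exact clfComponent_div_two_pow_ne hlt (by omega) h.symm

end lattice

lemma integral_half_sub_abs_zero_half : ∫ u in (0 : ℝ)..1/2, (1/2 - |u|) = 1/8 := by
  rw [intervalIntegral.integral_congr (g := fun u ↦ 1/2 - u) fun u hu ↦ by
    rw [Set.uIcc_of_le (by norm_num)] at hu; simp only [abs_of_nonneg hu.1]]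
  rw [intervalIntegral.integral_sub intervalIntegrable_const intervalIntegral.intervalIntegrable_id]
  norm_num

lemma integral_half_sub_abs_neg_half : ∫ u in -(1/2 : ℝ)..0, (1/2 - |u|) = 1/8 := by
  rw [intervalIntegral.integral_congr (g := fun u ↦ 1/2 + u) fun u hu ↦ by
    rw [Set.uIcc_of_le (by norm_num)] at hu; simp only [abs_of_nonpos hu.2, sub_neg_eq_add]]
  rw [intervalIntegral.integral_add intervalIntegrable_const intervalIntegral.intervalIntegrable_id]
  norm_num

lemma integral_tent_right {c : ℝ} (hc : c ≠ 0) (a : ℝ) :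
    ∫ x in a / c..(a + 1/2) / c, (1/2 - |c * x - a|) = 1 / (8 * c) := by
  rw [intervalIntegral.integral_comp_mul_sub (fun u ↦ 1/2 - |u|) hc, mul_div_cancel₀ _ hc,
    mul_div_cancel₀ _ hc, sub_self, add_sub_cancel_left, integral_half_sub_abs_zero_half,
    smul_eq_mul]
  field_simp

lemma integral_tent_left {c : ℝ} (hc : c ≠ 0) (a : ℝ) :
    ∫ x in (a - 1/2) / c..a / c, (1/2 - |c * x - a|) = 1 / (8 * c) := by
  rw [intervalIntegral.integral_comp_mul_sub (fun u ↦ 1/2 - |u|) hc, mul_div_cancel₀ _ hc,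
    mul_div_cancel₀ _ hc, sub_self, sub_sub_cancel_left, integral_half_sub_abs_neg_half,
    smul_eq_mul]
  field_simp

lemma integral_tent_le_integral_clfComponent {k j : ℕ} (hj : j ≤ 2 ^ k) {lo hi : ℝ}
    (hlohi : lo ≤ hi) (hlo : 0 ≤ lo ∧ j - 1/2 ≤ lo) (hhi : hi ≤ 2 ^ k ∧ hi ≤ j + 1/2) :
    ∫ x in lo / 2 ^ k..hi / 2 ^ k, (1/2 - |2 ^ k * x - j|) ≤
      ∫ x in clfComponent (triangleF^[k]) ((j : ℝ) / 2 ^ k), |triangleF^[k] x - 1/2| := by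
  have hc : (0 : ℝ) < 2 ^ k := by positivity
  have hscaled : ∀ x ∈ Set.Ioo (lo / 2 ^ k) (hi / 2 ^ k),
      x ∈ Set.Icc 0 1 ∧ |2 ^ k * x - j| < 1/2 := fun x ⟨hx₁, hx₂⟩ ↦ by
    rw [div_lt_iff₀' hc] at hx₁
    rw [lt_div_iff₀' hc] at hx₂
    refine ⟨⟨?_, ?_⟩, abs_lt.2 ⟨?_, ?_⟩⟩ <;> nlinarith
  have hcont : Continuous fun x ↦ |triangleF^[k] x - 1/2| :=
    ((continuous_triangleF.iterate k).sub continuous_const).abs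
  calc ∫ x in lo / 2 ^ k..hi / 2 ^ k, (1/2 - |2 ^ k * x - j|)
      = ∫ x in Set.Ioo (lo / 2 ^ k) (hi / 2 ^ k), (1/2 - |2 ^ k * x - j|) := by
        rw [intervalIntegral.integral_of_le (by gcongr), integral_Ioc_eq_integral_Ioo]
    _ = ∫ x in Set.Ioo (lo / 2 ^ k) (hi / 2 ^ k), |triangleF^[k] x - 1/2| := by
        refine setIntegral_congr_fun measurableSet_Ioo fun x hx ↦ ?_
        rw [iterate_triangleF_eq k (hscaled x hx).1,
          abs_triangleWave_sub_half j (by exact_mod_cast (hscaled x hx).2.le)]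
        norm_cast
    _ ≤ ∫ x in clfComponent (triangleF^[k]) ((j : ℝ) / 2 ^ k), |triangleF^[k] x - 1/2| :=
        setIntegral_mono_set (hcont.integrableOn_Icc.mono_set clfComponent_subset_Icc)
          (ae_of_all _ fun _ ↦ abs_nonneg _)
          (ae_of_all _ fun x hx ↦
            mem_clfComponent_div_two_pow hj (hscaled x hx).1 (Or.inl (hscaled x hx).2))

lemma le_integral_clfComponent_div_two_pow {k j : ℕ} (hj : j ≤ 2 ^ k) :
    (2 : ℝ) ^ (-(k : ℤ) - 3) ≤
      ∫ x in clfComponent (triangleF^[k]) ((j : ℝ) / 2 ^ k), |triangleF^[k] x - 1/2| := by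
  have hc : (2 : ℝ) ^ k ≠ 0 := by positivity
  have hbound : (2 : ℝ) ^ (-(k : ℤ) - 3) = 1 / (8 * 2 ^ k) := by
    rw [zpow_sub₀ two_ne_zero, zpow_neg, zpow_natCast]
    ring
  have hjR : (j : ℝ) ≤ 2 ^ k := by exact_mod_cast hj
  rw [hbound]
  rcases hj.lt_or_eq with hj' | rfl
  · have hjR' : (j : ℝ) + 1 ≤ 2 ^ k := by exact_mod_cast hj'
    rw [← integral_tent_right hc]
    exact integral_tent_le_integral_clfComponent hj (by linarith)
      ⟨by positivity, by linarith⟩ ⟨by linarith, le_rfl⟩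
  · rw [← integral_tent_left hc]
    exact integral_tent_le_integral_clfComponent hj (by linarith)
      ⟨by push_cast; linarith [one_le_pow₀ (M₀ := ℝ) one_le_two (n := k)], le_rfl⟩
      ⟨hjR, by linarith⟩

theorem triangle_iterate_pieces_general (k : ℕ) (I : Finset (Set ℝ))
    (hI : IsCrossingPartitionOn triangleF^[k] I)
    (hmin : ∀ J : Finset (Set ℝ), IsCrossingPartitionOn triangleF^[k] J → I.card ≤ J.card) :
    I.card = 2 ^ k + 1 ∧
    ∀ U ∈ I, (∫ x in U, |triangleF^[k] x - 1/2|) ≥ (2:ℝ) ^ (-(k:ℤ) - 3) := by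
  classical
  set K := (Finset.range (2 ^ k + 1)).image
    fun j : ℕ ↦ clfComponent (triangleF^[k]) ((j : ℝ) / 2 ^ k)
  have hcover : ∀ x ∈ Set.Icc (0 : ℝ) 1, ∃ j ∈ Finset.range (2 ^ k + 1),
      x ∈ clfComponent (triangleF^[k]) ((j : ℝ) / 2 ^ k) := fun x hx ↦
    let ⟨j, hj, hxj⟩ := exists_mem_clfComponent_div_two_pow hx
    ⟨j, Finset.mem_range_succ_iff.2 hj, hxj⟩
  have hK : IsCrossingPartitionOn triangleF^[k] K := isCrossingPartitionOn_image_clfComponent _ _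
    (fun j hj ↦ div_two_pow_mem_Icc (Finset.mem_range_succ_iff.1 hj)) hcover
  have hrefine : ∀ U ∈ I, ∃ V ∈ K, U ⊆ V := by
    intro U hU
    obtain ⟨x, hx⟩ := (hI.1 U hU).2
    obtain ⟨j, hj, hxj⟩ := hcover x (hI.2.2.1 ▸ Set.subset_sUnion_of_mem hU hx)
    exact ⟨_, Finset.mem_image_of_mem _ hj,
      clfComponent_eq_of_mem hxj ▸ hI.subset_clfComponent hU hx⟩
  have hIK : I = K := Finset.eq_of_refinement_of_card_le hK.2.1 (fun V hV ↦ (hK.1 V hV).2)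
    (by rw [hI.2.2.1, hK.2.2.1]) hrefine (hmin K hK)
  rw [hIK, Finset.card_image_of_injOn (injOn_clfComponent_div_two_pow k), Finset.card_range]
  refine ⟨rfl, fun U hU ↦ ?_⟩
  obtain ⟨j, hj, rfl⟩ := Finset.mem_image.1 hU
  exact le_integral_clfComponent_div_two_pow (Finset.mem_range_succ_iff.1 hj)

/-- The pieces of `f^k` on `[0,1]`: there are `2^k + 1` of them, and on each the
triangle wave contributes at least `2^(−k−3)` of `L¹` mass about `1/2`. -/
theorem triangle_iterate_pieces (k : ℕ) (hk : 1 ≤ k) (I : Finset (Set ℝ))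
    (hI : IsCrossingPartitionOn triangleF^[k] I)
    (hmin : ∀ J : Finset (Set ℝ), IsCrossingPartitionOn triangleF^[k] J → I.card ≤ J.card) :
    I.card = 2 ^ k + 1 ∧
    ∀ U ∈ I, (∫ x in U, |triangleF^[k] x - 1/2|) ≥ (2:ℝ) ^ (-(k:ℤ) - 3) :=
  triangle_iterate_pieces_general k I hI hmin
end
end

section
/- Let f : ℝ → ℝ be (1,[0,1])-triangle and k ≥ 1. Let s = 2^k + 1; there exist s points 0 = z₁ < ⋯ < z_s = 1 with f^k(z_i) ∈ {0,1} alternating starting at 0 (i.e., f^k(z_i) = 1[i even]). Let ν be the uniform probability measure on {(z_i, 0, ..., 0) : i ∈ [s]} ⊂ ℝ^d, and define H : ℝ^d → ℝ by H(x) = f^k(x₁). Then every g : ℝ^d → ℝ such that z ↦ g(z,y) has crossing number at most 2^{k−2} for every y ∈ ℝ^{d−1} satisfies ∫ |H̃ − g̃| dν ≥ 1/4, where H̃(x) = 1[H(x) ≥ 1/2] and g̃(x) = 1[g(x) ≥ 1/2]. -/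
open MeasureTheory
open scoped ENNReal

noncomputable section

private lemma aux_arith (k : ℕ) (hk : 1 ≤ k) : 2 * 2 ^ (k - 2) ≤ 2 ^ k + 1 := by
  rcases k with _ | _ | m
  · omega
  · norm_num
  · have h1 : 2 * 2 ^ (m + 2 - 2) = 2 ^ (m + 1) := by
      simp only [Nat.add_sub_cancel]
      rw [pow_succ, mul_comm]
    rw [h1]
    have := Nat.pow_le_pow_right (by norm_num : 1 ≤ 2) (Nat.le_succ (m+1))
    omega

/-- Part of Theorem 3.12: over the uniform measure on the `2^k + 1` alternation
points of `f^k`, any `g` with low crossing number in each axis-slice disagrees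
with the classifier of `f^k` on at least a quarter of the points. -/
theorem triangle_discrete_inapprox (d k : ℕ) (hk : 1 ≤ k) (hd : 0 < d)
    (f : ℝ → ℝ) (hf : IsTriangle f 1)
    (z : Fin (2 ^ k + 1) → ℝ) (hz0 : z 0 = 0) (hzlast : z (Fin.last (2 ^ k)) = 1)
    (hmono : StrictMono z)
    (halt : ∀ i : Fin (2 ^ k + 1), f^[k] (z i) = if Even (i : ℕ) then 0 else 1)
    (g : (Fin d → ℝ) → ℝ)
    (hg : ∀ y : Fin d → ℝ, ∃ I : Finset (Set ℝ),
      IsCrossingPartition (fun t => g (Function.update y ⟨0, hd⟩ t)) I ∧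
      I.card ≤ 2 ^ (k - 2)) :
    (∫ x, |(if (1:ℝ)/2 ≤ f^[k] (x ⟨0, hd⟩) then (1:ℝ) else 0) -
        (if (1:ℝ)/2 ≤ g x then (1:ℝ) else 0)|
      ∂(((2 ^ k + 1 : ℕ) : ℝ≥0∞)⁻¹ • ∑ i : Fin (2 ^ k + 1),
          Measure.dirac (fun j : Fin d => if j = ⟨0, hd⟩ then z i else 0))) ≥ 1 / 4 := by

  classical
  set p : Fin d := ⟨0, hd⟩ with hp
  obtain ⟨I, ⟨⟨hord, hdisj, hcover⟩, hconst⟩, hcard⟩ := hg (fun _ => 0)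
  have hltn : ∀ i : ℕ, min i (2 ^ k) < 2 ^ k + 1 := fun i => by omega
  set w : ℕ → ℝ := fun i => z ⟨min i (2 ^ k), hltn i⟩ with hw
  have hwmono : Monotone w := by
    intro i j hij
    exact hmono.monotone (Fin.mk_le_mk.mpr (by omega))
  set G : ℝ → ℝ := fun t => g (Function.update (fun _ => 0) p t) with hG
  set c : ℕ → Prop := fun i => clf G (w i) with hc
  have hex : ∀ r : ℝ, ∃ U, U ∈ I ∧ r ∈ U := by
    intro r
    have hr : r ∈ ⋃₀ (I : Set (Set ℝ)) := hcover ▸ Set.mem_univ r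
    obtain ⟨U, hU, hrU⟩ := hr
    exact ⟨U, hU, hrU⟩
  choose u humem humemself using hex
  have key : ∀ i j : ℕ, i ≤ j → u (w i) = u (w (j+1)) → (c j ↔ c (j+1)) := by
    intro i j hij huij
    have h1 : w j ∈ u (w (j+1)) := by
      have hoc := (hord _ (humem (w (j+1)))).1
      exact hoc.out (huij ▸ humemself (w i)) (humemself (w (j+1)))
        ⟨hwmono hij, hwmono (Nat.le_succ j)⟩
    exact hconst _ (humem (w (j+1))) _ h1 _ (humemself (w (j+1)))
  set CH := (Finset.range (2 ^ k)).filter (fun i => ¬ (c i ↔ c (i+1))) with hCH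
  set NC := (Finset.range (2 ^ k)).filter (fun i => (c i ↔ c (i+1))) with hNC
  set D := (Finset.range (2 ^ k + 1)).filter (fun i => ¬ (Odd i ↔ c i)) with hD
  have hA : CH.card + 1 ≤ 2 ^ (k - 2) := by
    have hmaps : ∀ i ∈ CH, u (w (i+1)) ∈ I.erase (u (w 0)) := by
      intro i hi
      refine Finset.mem_erase.mpr ⟨?_, humem _⟩
      intro heq
      exact (Finset.mem_filter.mp hi).2 (key 0 i (Nat.zero_le i) heq.symm)
    have hinj : Set.InjOn (fun i => u (w (i+1))) CH := by
      intro i hi j hj hij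
      by_contra hne
      rcases Nat.lt_or_ge i j with h | h
      · exact (Finset.mem_filter.mp hj).2 (key (i+1) j h hij)
      · have h' : j + 1 ≤ i := by omega
        exact (Finset.mem_filter.mp hi).2 (key (j+1) i h' hij.symm)
    have h1 : CH.card ≤ (I.erase (u (w 0))).card :=
      Finset.card_le_card_of_injOn _ hmaps hinj
    have hU0 : u (w 0) ∈ I := humem _
    have hpos : 1 ≤ I.card := Finset.card_pos.mpr ⟨_, hU0⟩
    rw [Finset.card_erase_of_mem hU0] at h1
    omega
  have hNCCH : NC.card + CH.card = 2 ^ k := by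
    have := Finset.card_filter_add_card_filter_not
      (s := Finset.range (2 ^ k)) (p := fun i => (c i ↔ c (i+1)))
    simpa using this
  have hB : NC.card ≤ 2 * D.card := by
    set φ : ℕ → ℕ := fun i => if Odd i ↔ c i then i + 1 else i with hφ
    have himg : NC.image φ ⊆ D := by
      intro a ha
      obtain ⟨i, hi, rfl⟩ := Finset.mem_image.mp ha
      obtain ⟨hir, hic⟩ := Finset.mem_filter.mp hi
      have hin : i < 2 ^ k := Finset.mem_range.mp hir
      by_cases hodd : Odd i ↔ c i
      · have hphi : φ i = i + 1 := if_pos hodd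
        rw [hphi]
        refine Finset.mem_filter.mpr ⟨Finset.mem_range.mpr (by omega), ?_⟩
        have hodd1 : Odd (i+1) ↔ ¬ Odd i := by
          rw [Nat.odd_iff, Nat.odd_iff]; omega
        tauto
      · have hphi : φ i = i := if_neg hodd
        rw [hphi]
        exact Finset.mem_filter.mpr ⟨Finset.mem_range.mpr (by omega), hodd⟩
    have hfib : ∀ a ∈ NC.image φ, (NC.filter (fun i => φ i = a)).card ≤ 2 := by
      intro a _
      have hsub : NC.filter (fun i => φ i = a) ⊆ {a - 1, a} := by
        intro i hi
        obtain ⟨_, hia⟩ := Finset.mem_filter.mp hi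
        simp only [Finset.mem_insert, Finset.mem_singleton]
        by_cases hodd : Odd i ↔ c i
        · rw [hφ] at hia; simp only [if_pos hodd] at hia; omega
        · rw [hφ] at hia; simp only [if_neg hodd] at hia; omega
      calc (NC.filter (fun i => φ i = a)).card ≤ ({a - 1, a} : Finset ℕ).card :=
            Finset.card_le_card hsub
        _ ≤ 2 := (Finset.card_insert_le _ _).trans (by simp)
    calc NC.card ≤ 2 * (NC.image φ).card := Finset.card_le_mul_card_image _ 2 hfib
      _ ≤ 2 * D.card := Nat.mul_le_mul_left 2 (Finset.card_le_card himg)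
  have hcount : 2 ^ k + 1 ≤ 4 * D.card := by
    have := aux_arith k hk
    omega
  -- integral computation
  have hint : ∀ i ∈ (Finset.univ : Finset (Fin (2 ^ k + 1))),
      Integrable (fun x : Fin d → ℝ =>
        |(if (1:ℝ)/2 ≤ f^[k] (x p) then (1:ℝ) else 0) - (if (1:ℝ)/2 ≤ g x then (1:ℝ) else 0)|)
        (Measure.dirac (fun j : Fin d => if j = p then z i else 0)) := fun i _ =>
    (integrable_const _).congr (ae_eq_dirac _).symm
  rw [ge_iff_le, integral_smul_measure, integral_finset_sum_measure hint]
  simp only [integral_dirac]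
  simp only [eq_self_iff_true, if_true]
  have hupd : ∀ i : Fin (2 ^ k + 1),
      Function.update (fun _ => (0:ℝ)) p (z i) = (fun j : Fin d => if j = p then z i else 0) := by
    intro i
    funext j
    rw [Function.update_apply]
  have hterm : ∀ i : Fin (2 ^ k + 1),
      |(if (1:ℝ)/2 ≤ f^[k] (z i) then (1:ℝ) else 0) -
        (if (1:ℝ)/2 ≤ g (fun j : Fin d => if j = p then z i else 0) then (1:ℝ) else 0)|
      = if ¬ (Odd (i:ℕ) ↔ c (i:ℕ)) then (1:ℝ) else 0 := by
    intro i
    have hisLt := i.isLt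
    have hzi : w (i:ℕ) = z i := by
      rw [hw]
      exact congrArg z (Fin.ext (show min (i:ℕ) (2 ^ k) = (i:ℕ) by omega))
    have hci : c (i:ℕ) ↔ (1:ℝ)/2 ≤ g (fun j : Fin d => if j = p then z i else 0) := by
      rw [hc]
      simp only [clf, hG, hzi, hupd i]
    have h1 : (if (1:ℝ)/2 ≤ f^[k] (z i) then (1:ℝ) else 0)
        = if Odd (i:ℕ) then (1:ℝ) else 0 := by
      rw [halt i]
      by_cases he : Even (i:ℕ)
      · have ho : ¬ Odd (i:ℕ) := by
          rw [Nat.odd_iff]; rw [Nat.even_iff] at he; omega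
        rw [if_pos he, if_neg (by norm_num), if_neg ho]
      · have ho : Odd (i:ℕ) := by
          rw [Nat.odd_iff]; rw [Nat.even_iff] at he; omega
        rw [if_neg he, if_pos (by norm_num), if_pos ho]
    have h2 : (if (1:ℝ)/2 ≤ g (fun j : Fin d => if j = p then z i else 0) then (1:ℝ) else 0)
        = if c (i:ℕ) then (1:ℝ) else 0 := if_congr hci.symm rfl rfl
    rw [h1, h2]
    by_cases ho : Odd (i:ℕ) <;> by_cases hcc : c (i:ℕ) <;> simp [ho, hcc]
  have hsum : (∑ i : Fin (2 ^ k + 1),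
      |(if (1:ℝ)/2 ≤ f^[k] (z i) then (1:ℝ) else 0) -
        (if (1:ℝ)/2 ≤ g (fun j : Fin d => if j = p then z i else 0) then (1:ℝ) else 0)|)
      = (D.card : ℝ) := by
    rw [Finset.sum_congr rfl (fun i _ => hterm i)]
    rw [Fin.sum_univ_eq_sum_range (fun m => if ¬ (Odd m ↔ c m) then (1:ℝ) else 0)]
    rw [hD, Finset.sum_boole]
  rw [hsum]
  simp only [ENNReal.toReal_inv, ENNReal.toReal_natCast, smul_eq_mul]
  have hcast : ((2 ^ k + 1 : ℕ) : ℝ) ≤ 4 * (D.card : ℝ) := by exact_mod_cast hcount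
  rw [inv_mul_eq_div, le_div_iff₀ (by positivity)]
  push_cast at hcast ⊢
  linarith
end
end

section
/- For every integer k ≥ 1, define h := f^k where f(z) = 4z(1−z), a polynomial of degree 2^k. There exists a Borel probability measure μ on [0,1], continuous and positive on all of [0,1], such that every polynomial g : ℝ → ℝ of degree at most 2^{k−3} satisfies ∫₀¹ |h − g| dμ ≥ 1/32. -/
/-!
Substituting `z = haversine θ = (1 - cos θ) / 2` conjugates `z ↦ 4z(1 - z)` to `θ ↦ 2θ`, so
`f^[k] (haversine θ) = (1 - cos (2^k θ)) / 2`, while `g (haversine θ)` is a polynomial in `cos θ`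
of degree `< 2^k` and hence orthogonal to `cos (2^k θ)` on `[0, π]`. Take for `μ` the law of
`haversine (π U)` with `U` uniform on `[0, 1]` (the arcsine law). Pairing `h - g` with the
function `-cos (2^k θ)` of modulus at most `1` gives
`∫ |h - g| dμ ≥ π⁻¹ ∫₀^π cos² (2^k θ) / 2 dθ = 1 / 4`.
-/

open MeasureTheory
open scoped ENNReal

noncomputable section

open Set Real Polynomial

def haversine (θ : ℝ) : ℝ := (1 - cos θ) / 2

lemma continuous_haversine : Continuous haversine := by
  unfold haversine; fun_prop

lemma haversine_mem_Icc (θ : ℝ) : haversine θ ∈ Icc 0 1 := by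
  unfold haversine
  constructor <;> linarith [neg_one_le_cos θ, cos_le_one θ]

lemma strictMonoOn_haversine : StrictMonoOn haversine (Icc 0 π) :=
  fun _ hs _ ht hst => by
    unfold haversine
    linarith [strictAntiOn_cos hs ht hst]

lemma logistic_haversine (θ : ℝ) :
    4 * haversine θ * (1 - haversine θ) = haversine (2 * θ) := by
  unfold haversine; rw [cos_two_mul]; ring

lemma logistic_iterate_haversine (k : ℕ) (θ : ℝ) :
    (fun z : ℝ => 4 * z * (1 - z))^[k] (haversine θ) = haversine (2 ^ k * θ) := by
  have h : Function.Semiconj haversine (2 * ·) (fun z => 4 * z * (1 - z)) :=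
    fun θ => (logistic_haversine θ).symm
  simpa only [mul_left_iterate] using (h.iterate_right k θ).symm

lemma integral_cos_nat_mul {j : ℕ} (hj : j ≠ 0) : ∫ θ in 0..π, cos (j * θ) = 0 := by
  have hj' : (j : ℝ) ≠ 0 := Nat.cast_ne_zero.mpr hj
  simp [intervalIntegral.integral_comp_mul_left (fun θ => cos θ) hj', sin_nat_mul_pi]

lemma integral_cos_nat_mul_sq {j : ℕ} (hj : j ≠ 0) : ∫ θ in 0..π, cos (j * θ) ^ 2 = π / 2 := by
  have hj' : (j : ℝ) ≠ 0 := Nat.cast_ne_zero.mpr hj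
  rw [intervalIntegral.integral_comp_mul_left (fun θ => cos θ ^ 2) hj', integral_cos_sq]
  simp only [sin_nat_mul_pi, mul_zero, cos_zero, sin_zero, sub_self, zero_add, sub_zero,
    smul_eq_mul]
  field_simp

lemma integral_cos_pow_mul_cos_nat_mul {m j : ℕ} (hmj : m < j) :
    ∫ θ in 0..π, cos θ ^ m * cos (j * θ) = 0 := by
  induction m generalizing j with
  | zero => simpa using integral_cos_nat_mul hmj.ne'
  | succ m ih =>
    obtain ⟨i, rfl⟩ : ∃ i, j = i + 1 := ⟨j - 1, by omega⟩
    have product_to_sum : ∀ θ, cos θ ^ (m + 1) * cos ((i + 1 : ℕ) * θ)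
        = (cos θ ^ m * cos ((i + 2 : ℕ) * θ) + cos θ ^ m * cos (i * θ)) / 2 := by
      intro θ
      have h₁ : ((i + 2 : ℕ) : ℝ) * θ = θ + (i + 1 : ℕ) * θ := by push_cast; ring
      have h₂ : (i : ℝ) * θ = (i + 1 : ℕ) * θ - θ := by push_cast; ring
      rw [h₁, h₂, cos_add, cos_sub]; ring
    have hint (n : ℕ) : IntervalIntegrable (fun θ => cos θ ^ m * cos (n * θ)) volume 0 π := by
      apply Continuous.intervalIntegrable; fun_prop
    simp_rw [product_to_sum]
    rw [intervalIntegral.integral_div, intervalIntegral.integral_add (hint _) (hint _),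
      ih (by omega), ih (by omega), add_zero, zero_div]

lemma integral_eval_cos_mul_cos_nat_mul {p : ℝ[X]} {N : ℕ} (hp : p.natDegree < N) :
    ∫ θ in 0..π, p.eval (cos θ) * cos (N * θ) = 0 := by
  simp_rw [eval_eq_sum_range, Finset.sum_mul, mul_assoc]
  rw [intervalIntegral.integral_finsetSum fun i _ => by
    apply Continuous.intervalIntegrable; fun_prop]
  refine Finset.sum_eq_zero fun i hi => ?_
  rw [intervalIntegral.integral_const_mul,
    integral_cos_pow_mul_cos_nat_mul (by rw [Finset.mem_range] at hi; omega), mul_zero]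

lemma intervalIntegral.integral_mul_le_integral_abs {f w : ℝ → ℝ} {a b : ℝ} (hab : a ≤ b)
    (hfw : IntervalIntegrable (fun x => f x * w x) volume a b)
    (hf : IntervalIntegrable (fun x => |f x|) volume a b) (hw : ∀ x ∈ Icc a b, |w x| ≤ 1) :
    ∫ x in a..b, f x * w x ≤ ∫ x in a..b, |f x| :=
  intervalIntegral.integral_mono_on hab hfw hf fun x hx =>
    (le_abs_self _).trans <| by rw [abs_mul]; exact mul_le_of_le_one_right (abs_nonneg _) (hw x hx)

lemma pi_div_four_le_integral_abs_cos_div_two_add_eval_cos {p : ℝ[X]} {N : ℕ}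
    (hp : p.natDegree < N) : π / 4 ≤ ∫ θ in 0..π, |cos (N * θ) / 2 + p.eval (cos θ)| := by
  have hint {f : ℝ → ℝ} (hf : Continuous f) : IntervalIntegrable f volume 0 π :=
    hf.intervalIntegrable _ _
  calc π / 4 = ∫ θ in 0..π, (cos (N * θ) / 2 + p.eval (cos θ)) * cos (N * θ) := by
        simp_rw [add_mul, div_mul_eq_mul_div, ← sq]
        rw [intervalIntegral.integral_add (hint (by fun_prop)) (hint (by fun_prop)),
          intervalIntegral.integral_div, integral_cos_nat_mul_sq (by omega),
          integral_eval_cos_mul_cos_nat_mul hp]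
        ring
    _ ≤ _ := intervalIntegral.integral_mul_le_integral_abs pi_pos.le (hint (by fun_prop))
        (hint (by fun_prop)) fun θ _ => abs_cos_le_one _

lemma natDegree_comp_linear_le {R : Type*} [Semiring R] (g : R[X]) (a b : R) :
    (g.comp (C a * X + C b)).natDegree ≤ g.natDegree :=
  natDegree_comp_le.trans <| by
    simpa using Nat.mul_le_mul_left g.natDegree (natDegree_linear_le (a := a) (b := b))

lemma pi_div_four_le_integral_abs_haversine_sub_eval {g : ℝ[X]} {N : ℕ}
    (hg : g.natDegree < N) :
    π / 4 ≤ ∫ θ in 0..π, |haversine (N * θ) - g.eval (haversine θ)| := by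
  -- `p (cos θ) = g (haversine θ) - 1 / 2`
  set p := g.comp (C (-2⁻¹) * X + C 2⁻¹) - C 2⁻¹
  have hp : p.natDegree < N := by
    rw [natDegree_sub_C]; exact (natDegree_comp_linear_le g _ _).trans_lt hg
  convert pi_div_four_le_integral_abs_cos_div_two_add_eval_cos hp using 3 with θ
  rw [← abs_neg]
  simp only [p, haversine, eval_sub, eval_comp, eval_add, eval_mul, eval_C, eval_X]
  ring_nf

section PushforwardOfUnitInterval

variable {φ : ℝ → ℝ}

lemma isProbabilityMeasure_map_volume_restrict_Icc (hφ : Measurable φ) :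
    IsProbabilityMeasure ((volume.restrict (Icc (0:ℝ) 1)).map φ) :=
  have : IsProbabilityMeasure (volume.restrict (Icc (0:ℝ) 1)) := ⟨by simp⟩
  Measure.isProbabilityMeasure_map hφ.aemeasurable

lemma map_volume_restrict_Icc_compl (hφ : Measurable φ) (hmaps : MapsTo φ (Icc 0 1) (Icc 0 1)) :
    (volume.restrict (Icc (0:ℝ) 1)).map φ (Icc 0 1)ᶜ = 0 := by
  rw [Measure.map_apply hφ measurableSet_Icc.compl, Measure.restrict_apply' measurableSet_Icc]
  convert measure_empty (μ := volume)
  exact disjoint_iff_inter_eq_empty.mp (Set.disjoint_left.mpr fun t ht h => ht (hmaps h))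

lemma map_volume_restrict_Icc_singleton (hφ : Measurable φ) (hinj : InjOn φ (Icc 0 1)) (x : ℝ) :
    (volume.restrict (Icc (0:ℝ) 1)).map φ {x} = 0 := by
  rw [Measure.map_apply hφ (measurableSet_singleton x), Measure.restrict_apply' measurableSet_Icc]
  exact Subsingleton.measure_zero (fun a ha b hb => hinj ha.2 hb.2 (ha.1.trans hb.1.symm)) _

lemma map_volume_restrict_Icc_pos_of_isOpen (hφ : Continuous φ)
    (hsurj : SurjOn φ (Ioo 0 1) (Ioo 0 1)) {U : Set ℝ} (hU : IsOpen U)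
    (hmeets : (U ∩ Icc 0 1).Nonempty) :
    0 < (volume.restrict (Icc (0:ℝ) 1)).map φ U := by
  rw [← closure_Ioo zero_ne_one, inter_comm, closure_inter_open_nonempty_iff hU] at hmeets
  obtain ⟨_, hy01, hyU⟩ := hmeets
  obtain ⟨t, ht01, rfl⟩ := hsurj hy01
  rw [Measure.map_apply hφ.measurable hU.measurableSet,
    Measure.restrict_apply (hU.measurableSet.preimage hφ.measurable)]
  calc 0 < volume (φ ⁻¹' U ∩ Ioo 0 1) :=
        ((hU.preimage hφ).inter isOpen_Ioo).measure_pos _ ⟨t, hyU, ht01⟩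
    _ ≤ _ := measure_mono (inter_subset_inter_right _ Ioo_subset_Icc_self)

end PushforwardOfUnitInterval

def arcsineMeasure : Measure ℝ :=
  (volume.restrict (Icc (0:ℝ) 1)).map fun t => haversine (π * t)

lemma continuous_haversine_pi_mul : Continuous fun t => haversine (π * t) :=
  continuous_haversine.comp (continuous_const_mul π)

lemma strictMonoOn_haversine_pi_mul : StrictMonoOn (fun t => haversine (π * t)) (Icc 0 1) :=
  strictMonoOn_haversine.comp (StrictMono.strictMonoOn (strictMono_mul_left_of_pos pi_pos) _)
    fun t ht => ⟨by nlinarith [pi_pos, ht.1], by nlinarith [pi_pos, ht.2]⟩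

lemma surjOn_haversine_pi_mul : SurjOn (fun t => haversine (π * t)) (Ioo 0 1) (Ioo 0 1) := by
  have h := intermediate_value_Ioo zero_le_one continuous_haversine_pi_mul.continuousOn
  simpa [haversine, SurjOn] using h

lemma integral_arcsineMeasure {F : ℝ → ℝ} (hF : Continuous F) :
    ∫ x, F x ∂arcsineMeasure = π⁻¹ * ∫ θ in 0..π, F (haversine θ) := by
  rw [arcsineMeasure, integral_map continuous_haversine_pi_mul.aemeasurable
      hF.aestronglyMeasurable, integral_Icc_eq_integral_Ioc,
    ← intervalIntegral.integral_of_le zero_le_one,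
    intervalIntegral.integral_comp_mul_left (fun θ => F (haversine θ)) pi_ne_zero]
  simp

/-- Corollary A.1: there is a continuous probability measure, positive on `[0,1]`,
with respect to which the degree-`2^k` polynomial `h = (4z(1−z))^k` is far in `L¹`
from every polynomial of degree at most `2^(k−3)`. -/
theorem poly_inapprox (k : ℕ) (hk : 1 ≤ k) :
    ∃ μ : Measure ℝ, IsProbabilityMeasure μ ∧
      μ (Set.Icc (0:ℝ) 1)ᶜ = 0 ∧
      (∀ x : ℝ, μ {x} = 0) ∧
      (∀ U : Set ℝ, IsOpen U → (U ∩ Set.Icc (0:ℝ) 1).Nonempty → 0 < μ U) ∧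
      ∀ g : Polynomial ℝ, g.natDegree ≤ 2 ^ (k - 3) →
        (∫ x, |(fun z : ℝ => 4 * z * (1 - z))^[k] x - g.eval x| ∂μ) ≥ 1 / 32 := by
  have hmeas := continuous_haversine_pi_mul.measurable
  refine ⟨arcsineMeasure, isProbabilityMeasure_map_volume_restrict_Icc hmeas,
    map_volume_restrict_Icc_compl hmeas fun t _ => haversine_mem_Icc _,
    map_volume_restrict_Icc_singleton hmeas strictMonoOn_haversine_pi_mul.injOn,
    fun U hU => map_volume_restrict_Icc_pos_of_isOpen continuous_haversine_pi_mul
      surjOn_haversine_pi_mul hU, fun g hg => ?_⟩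
  have hdeg : g.natDegree < 2 ^ k := hg.trans_lt (Nat.pow_lt_pow_right one_lt_two (by omega))
  have hbound := pi_div_four_le_integral_abs_haversine_sub_eval hdeg
  push_cast at hbound
  rw [integral_arcsineMeasure (by fun_prop)]
  simp_rw [logistic_iterate_haversine]
  calc (1 : ℝ) / 32 ≤ π⁻¹ * (π / 4) := by field_simp; norm_num
    _ ≤ _ := by gcongr
end
end

section
/- Given r polynomials p₁, ..., p_r : ℝ^d → ℝ each of degree at most α, the maximization gate φ_max(v) := max_{i∈[r]} p_i(v) is (r(r−1), α, α)-semi-algebraic, via the representation φ_max(v) = Σᵢ p_i(v)(∏_{j<i} 1[p_i(v) > p_j(v)])(∏_{j>i} 1[p_i(v) ≥ p_j(v)]). -/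
open MeasureTheory
open scoped ENNReal

noncomputable section

/-- `f : ℝ^k → ℝ` is `(s,α,β)`-semi-algebraic. -/
def SemiAlgebraic {k : ℕ} (f : (Fin k → ℝ) → ℝ) (s α β : ℕ) : Prop :=
  ∃ q : Fin s → MvPolynomial (Fin k) ℝ, (∀ i, (q i).totalDegree ≤ α) ∧
    ∃ (m : ℕ) (L U : Fin m → Finset (Fin s)) (p : Fin m → MvPolynomial (Fin k) ℝ),
      (∀ j, (p j).totalDegree ≤ β) ∧
      ∀ v, f v = ∑ j, MvPolynomial.eval v (p j) *
        (∏ i ∈ L j, if MvPolynomial.eval v (q i) < 0 then (1:ℝ) else 0) *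
        (∏ i ∈ U j, if 0 ≤ MvPolynomial.eval v (q i) then (1:ℝ) else 0)

/-- The maximization gate `φ_max(v) = max_{i ∈ [r]} p_i(v)`. -/
noncomputable def phiMax {d r : ℕ} (hr : 1 ≤ r) (p : Fin r → MvPolynomial (Fin d) ℝ)
    (v : Fin d → ℝ) : ℝ :=
  Finset.univ.sup' ⟨⟨0, hr⟩, Finset.mem_univ _⟩ fun i => MvPolynomial.eval v (p i)

/-- Decode the second member of an encoded pair: the `k`-th element of `Fin r \ {i}`. -/
def decOther {r : ℕ} (i : Fin r) (k : Fin (r-1)) : Fin r :=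
  if h : (k : ℕ) < (i : ℕ) then ⟨k, lt_trans h i.isLt⟩
  else ⟨(k : ℕ) + 1, by have := k.isLt; omega⟩

lemma decOther_val {r : ℕ} (i : Fin r) (k : Fin (r-1)) :
    ((decOther i k : Fin r) : ℕ) = if (k : ℕ) < (i : ℕ) then (k : ℕ) else (k : ℕ) + 1 := by
  unfold decOther; split_ifs <;> rfl

/-- Encode an ordered pair `(i, j)` with `j ≠ i` as an element of `Fin (r*(r-1))`. -/
def encPair {r : ℕ} (h2 : 2 ≤ r) (i j : Fin r) : Fin (r * (r-1)) :=
  finProdFinEquiv (i, ⟨if (j : ℕ) < (i : ℕ) then (j : ℕ) else (j : ℕ) - 1,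
    by have hi := i.isLt; have hj := j.isLt; split_ifs <;> omega⟩)

lemma decOther_enc {r : ℕ} (i j : Fin r) (hne : j ≠ i)
    (h : (if (j : ℕ) < (i : ℕ) then (j : ℕ) else (j : ℕ) - 1) < r - 1) :
    decOther i ⟨if (j : ℕ) < (i : ℕ) then (j : ℕ) else (j : ℕ) - 1, h⟩ = j := by
  have hv : (j : ℕ) ≠ (i : ℕ) := fun hh => hne (Fin.ext hh)
  apply Fin.ext
  rw [decOther_val]
  dsimp only
  split_ifs <;> omega

def qGate {d r : ℕ} (p : Fin r → MvPolynomial (Fin d) ℝ) (k : Fin (r*(r-1))) :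
    MvPolynomial (Fin d) ℝ :=
  if ((decOther (finProdFinEquiv.symm k).1 (finProdFinEquiv.symm k).2 : Fin r) : ℕ) <
      (((finProdFinEquiv.symm k).1 : Fin r) : ℕ)
  then p (decOther (finProdFinEquiv.symm k).1 (finProdFinEquiv.symm k).2) -
       p (finProdFinEquiv.symm k).1
  else p (finProdFinEquiv.symm k).1 -
       p (decOther (finProdFinEquiv.symm k).1 (finProdFinEquiv.symm k).2)

lemma qGate_enc {d r : ℕ} (p : Fin r → MvPolynomial (Fin d) ℝ) (h2 : 2 ≤ r)
    (i j : Fin r) (hne : j ≠ i) :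
    qGate p (encPair h2 i j) = if (j : ℕ) < (i : ℕ) then p j - p i else p i - p j := by
  unfold qGate encPair
  rw [Equiv.symm_apply_apply]
  rw [decOther_enc i j hne]

lemma encPair_inj {r : ℕ} (h2 : 2 ≤ r) (i : Fin r) {j1 j2 : Fin r}
    (h1 : j1 ≠ i) (h2' : j2 ≠ i) (he : encPair h2 i j1 = encPair h2 i j2) : j1 = j2 := by
  have := congrArg (fun k => decOther (finProdFinEquiv.symm k).1 (finProdFinEquiv.symm k).2) he
  simp only [encPair, Equiv.symm_apply_apply] at this
  exact ((decOther_enc i j1 h1 _).symm.trans this).trans (decOther_enc i j2 h2' _)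

lemma repr_eq {d r : ℕ} (hr : 1 ≤ r) (p : Fin r → MvPolynomial (Fin d) ℝ)
    (v : Fin d → ℝ) : phiMax hr p v =
      ∑ i, MvPolynomial.eval v (p i) *
        (∏ j ∈ Finset.univ.filter fun j => j < i,
          if MvPolynomial.eval v (p j) < MvPolynomial.eval v (p i) then (1:ℝ) else 0) *
        (∏ j ∈ Finset.univ.filter fun j => i < j,
          if MvPolynomial.eval v (p j) ≤ MvPolynomial.eval v (p i) then (1:ℝ) else 0) := by
  set f : Fin r → ℝ := fun i => MvPolynomial.eval v (p i) with hf
  set M : ℝ := phiMax hr p v with hM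
  have hle : ∀ i, f i ≤ M := fun i => Finset.le_sup' f (Finset.mem_univ i)
  obtain ⟨b, -, hb⟩ := Finset.exists_mem_eq_sup'
    (⟨⟨0, hr⟩, Finset.mem_univ _⟩ : (Finset.univ : Finset (Fin r)).Nonempty) f
  have hSne : ((Finset.univ : Finset (Fin r)).filter fun i => f i = M).Nonempty :=
    ⟨b, Finset.mem_filter.2 ⟨Finset.mem_univ _, hb.symm⟩⟩
  set S := (Finset.univ : Finset (Fin r)).filter fun i => f i = M with hS
  set i0 := S.min' hSne with hi0def
  have hi0 : f i0 = M := (Finset.mem_filter.1 (S.min'_mem hSne)).2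
  have hlt : ∀ j, j < i0 → f j < M := by
    intro j hj
    refine lt_of_le_of_ne (hle j) fun h => ?_
    exact absurd (S.min'_le j (Finset.mem_filter.2 ⟨Finset.mem_univ _, h⟩)) (not_le.2 hj)
  rw [Finset.sum_eq_single i0]
  · rw [Finset.prod_eq_one, Finset.prod_eq_one]
    · rw [mul_one, mul_one]; exact hi0.symm
    · intro j hj
      have hji : i0 < j := (Finset.mem_filter.1 hj).2
      rw [if_pos (le_of_le_of_eq (hle j) hi0.symm)]
    · intro j hj
      have hji : j < i0 := (Finset.mem_filter.1 hj).2
      rw [if_pos (lt_of_lt_of_eq (hlt j hji) hi0.symm)]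
  · intro i _ hne
    rcases lt_or_gt_of_ne hne with h | h
    · -- i < i0 : the second product vanishes at j = i0
      have : (∏ j ∈ Finset.univ.filter fun j => i < j,
          if f j ≤ f i then (1:ℝ) else 0) = 0 := by
        refine Finset.prod_eq_zero (Finset.mem_filter.2 ⟨Finset.mem_univ _, h⟩) ?_
        rw [if_neg (not_le.2 (lt_of_lt_of_eq (hlt i h) hi0.symm))]
      rw [this, mul_zero]
    · -- i0 < i : the first product vanishes at j = i0
      have : (∏ j ∈ Finset.univ.filter fun j => j < i,
          if f j < f i then (1:ℝ) else 0) = 0 := by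
        refine Finset.prod_eq_zero (Finset.mem_filter.2 ⟨Finset.mem_univ _, h⟩) ?_
        rw [if_neg (not_lt.2 (le_of_le_of_eq (hle i) hi0.symm))]
      rw [this, mul_zero, zero_mul]
  · intro h; exact absurd (Finset.mem_univ i0) h

/-- Lemma 2.3(2): the maximization gate over `r` polynomials of degree `≤ α` is
`(r(r−1), α, α)`-semi-algebraic, via the indicated representation. -/
theorem max_gate_semialgebraic (d r α : ℕ) (hr : 1 ≤ r)
    (p : Fin r → MvPolynomial (Fin d) ℝ) (hp : ∀ i, (p i).totalDegree ≤ α) :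
    (∀ v : Fin d → ℝ, phiMax hr p v =
      ∑ i, MvPolynomial.eval v (p i) *
        (∏ j ∈ Finset.univ.filter fun j => j < i,
          if MvPolynomial.eval v (p j) < MvPolynomial.eval v (p i) then (1:ℝ) else 0) *
        (∏ j ∈ Finset.univ.filter fun j => i < j,
          if MvPolynomial.eval v (p j) ≤ MvPolynomial.eval v (p i) then (1:ℝ) else 0)) ∧
    SemiAlgebraic (phiMax hr p) (r * (r - 1)) α α := by
  have hrepr := repr_eq hr p
  refine ⟨hrepr, ?_⟩
  rcases Nat.lt_or_ge r 2 with h1 | h2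
  · -- r = 1
    have hr1 : r = 1 := by omega
    subst hr1
    refine ⟨fun _ => 0, fun _ => by simp, 1, fun _ => ∅, fun _ => ∅, fun _ => p 0,
      fun _ => hp 0, fun v => ?_⟩
    have := hrepr v
    simpa [Finset.filter_eq_empty_iff, Fin.lt_def, Fin.ext_iff,
      show ∀ j : Fin 1, (j:ℕ) = 0 from fun j => by omega] using this
  · -- 2 ≤ r
    have hsub : ∀ a b : Fin r, ((p a - p b).totalDegree ≤ α) := fun a b => by
      rw [sub_eq_add_neg]
      exact le_trans (MvPolynomial.totalDegree_add _ _)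
        (by simp [MvPolynomial.totalDegree_neg, hp a, hp b])
    refine ⟨qGate p, fun k => ?_,
      r, (fun i => (Finset.univ.filter fun j => j < i).image (encPair h2 i)),
      (fun i => (Finset.univ.filter fun j => i < j).image (encPair h2 i)),
      p, hp, fun v => ?_⟩
    · unfold qGate; split_ifs <;> apply hsub
    · rw [hrepr v]
      refine Finset.sum_congr rfl fun i _ => ?_
      have e1 : (∏ k ∈ (Finset.univ.filter fun j => j < i).image (encPair h2 i),
          if MvPolynomial.eval v (qGate p k) < 0 then (1:ℝ) else 0) =
          ∏ j ∈ Finset.univ.filter fun j => j < i,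
            if MvPolynomial.eval v (p j) < MvPolynomial.eval v (p i) then (1:ℝ) else 0 := by
        rw [Finset.prod_image (fun x hx y hy h =>
          encPair_inj h2 i (ne_of_lt (Finset.mem_filter.1 hx).2)
            (ne_of_lt (Finset.mem_filter.1 hy).2) h)]
        refine Finset.prod_congr rfl fun j hj => ?_
        have hlt : j < i := (Finset.mem_filter.1 hj).2
        rw [qGate_enc p h2 i j (ne_of_lt hlt), if_pos (Fin.lt_def.1 hlt)]
        simp [sub_neg]
      have e2 : (∏ k ∈ (Finset.univ.filter fun j => i < j).image (encPair h2 i),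
          if 0 ≤ MvPolynomial.eval v (qGate p k) then (1:ℝ) else 0) =
          ∏ j ∈ Finset.univ.filter fun j => i < j,
            if MvPolynomial.eval v (p j) ≤ MvPolynomial.eval v (p i) then (1:ℝ) else 0 := by
        rw [Finset.prod_image (fun x hx y hy h =>
          encPair_inj h2 i (ne_of_gt (Finset.mem_filter.1 hx).2)
            (ne_of_gt (Finset.mem_filter.1 hy).2) h)]
        refine Finset.prod_congr rfl fun j hj => ?_
        have hlt : i < j := (Finset.mem_filter.1 hj).2
        rw [qGate_enc p h2 i j (ne_of_gt hlt), if_neg (not_lt.2 (le_of_lt (Fin.lt_def.1 hlt)))]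
        simp [sub_nonneg]
      rw [e1, e2]
end
end
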